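/- arXiv:math/0206114 — 5 statements merged into one kernel-verified Lean document; each statement's English description precedes it below -/
import Mathlib

section
/- For any fixed complex numbers e₁, e₂ (setting e₃ = −(e₁+e₂)), the bracket defined on the free ℂ-vector space with basis {V_n : n ∈ ℤ} by: [V_n,V_m] = (m−n)V_{n+m} if n,m both odd; [V_n,V_m] = (m−n)(V_{n+m} + 3e₁V_{n+m−2} + (e₁−e₂)(e₁−e₃)V_{n+m−4}) if n,m both even; and [V_n,V_m] = (m−n)V_{n+m} + (m−n−1)3e₁V_{n+m−2} + (m−n−2)(e₁−e₂)(e₁−e₃)V_{n+m−4} if n odd and m even (extended skew-symmetrically), satisfies the Jacobi identity. -/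
noncomputable section

/-- Bilinear extension of structure constants `C` to a bracket on `ℤ →₀ ℂ`. -/
def br (C : ℤ → ℤ → (ℤ →₀ ℂ)) (x y : ℤ →₀ ℂ) : ℤ →₀ ℂ :=
  x.sum fun n a => y.sum fun m b => (a * b) • C n m

/-- Structure constants of the elliptic Krichever-Novikov vector field algebra, with
`e₃ = -(e₁+e₂)`, extended skew-symmetrically according to the parity of the indices. -/
def ellC (e₁ e₂ : ℂ) (n m : ℤ) : ℤ →₀ ℂ :=
  if Odd n then
    if Odd m then
      Finsupp.single (n + m) ((m : ℂ) - n)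
    else
      Finsupp.single (n + m) ((m : ℂ) - n)
        + Finsupp.single (n + m - 2) (((m : ℂ) - n - 1) * (3 * e₁))
        + Finsupp.single (n + m - 4) (((m : ℂ) - n - 2) * ((e₁ - e₂) * (e₁ - (-(e₁ + e₂)))))
  else
    if Odd m then
      -(Finsupp.single (n + m) ((n : ℂ) - m)
        + Finsupp.single (n + m - 2) (((n : ℂ) - m - 1) * (3 * e₁))
        + Finsupp.single (n + m - 4) (((n : ℂ) - m - 2) * ((e₁ - e₂) * (e₁ - (-(e₁ + e₂))))))
    else
      Finsupp.single (n + m) ((m : ℂ) - n)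
        + Finsupp.single (n + m - 2) (((m : ℂ) - n) * (3 * e₁))
        + Finsupp.single (n + m - 4) (((m : ℂ) - n) * ((e₁ - e₂) * (e₁ - (-(e₁ + e₂)))))


/-! The Jacobiator is trilinear and invariant under cyclic permutations of its arguments, so it
vanishes as soon as it vanishes on triples of basis vectors `V_n, V_m, V_p`. For such a triple every
double bracket is a combination of `V_{n+m+p-2k}`, `0 ≤ k ≤ 4`, and once the parities of `n, m, p`
are fixed the identity becomes a polynomial identity in `n, m, p, e₁, e₂` for each coefficient. -/

open Finsupp

section Bracket

variable (C : ℤ → ℤ → (ℤ →₀ ℂ))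

def brₗ : (ℤ →₀ ℂ) →ₗ[ℂ] (ℤ →₀ ℂ) →ₗ[ℂ] (ℤ →₀ ℂ) :=
  lsum ℂ fun n => LinearMap.smulRight LinearMap.id
    (lsum ℂ fun m => LinearMap.smulRight LinearMap.id (C n m))

theorem br_eq_brₗ (x y : ℤ →₀ ℂ) : br C x y = brₗ C x y := by
  simp [br, brₗ, lsum_apply, smul_sum, mul_smul]

theorem brₗ_single_single (n m : ℤ) (a b : ℂ) :
    brₗ C (single n a) (single m b) = (a * b) • C n m := by
  simp [brₗ, mul_smul, smul_comm a b]

end Bracket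

theorem jacobi_of_basis {ι R M : Type*} [CommSemiring R] [AddCommMonoid M] [Module R M]
    (b : Module.Basis ι R M) (B : M →ₗ[R] M →ₗ[R] M)
    (h : ∀ i j k, B (B (b i) (b j)) (b k) + B (B (b j) (b k)) (b i) + B (B (b k) (b i)) (b j) = 0)
    (x y z : M) : B (B x y) z + B (B y z) x + B (B z x) y = 0 := by
  have rotate : ∀ x y z : M, B (B x y) z + B (B y z) x + B (B z x) y
      = B (B y z) x + B (B z x) y + B (B x y) z := fun _ _ _ => by abel
  have extend : ∀ y z : M, (∀ i, B (B (b i) y) z + B (B y z) (b i) + B (B z (b i)) y = 0) →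
      ∀ x, B (B x y) z + B (B y z) x + B (B z x) y = 0 := by
    intro y z hyz x
    let L : M →ₗ[R] M := B.flip z ∘ₗ B.flip y + B (B y z) + B.flip y ∘ₗ B z
    have hL : L = 0 := b.ext fun i => by simpa [L] using hyz i
    simpa [L] using LinearMap.congr_fun hL x
  refine extend y z (fun i => ?_) x
  rw [rotate]
  refine extend z _ (fun j => ?_) y
  rw [rotate]
  exact extend _ _ (fun k => h k i j) z

theorem jacobi_ellC_single (e₁ e₂ : ℂ) (n m p : ℤ) :
    brₗ (ellC e₁ e₂) (ellC e₁ e₂ n m) (single p 1)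
      + brₗ (ellC e₁ e₂) (ellC e₁ e₂ m p) (single n 1)
      + brₗ (ellC e₁ e₂) (ellC e₁ e₂ p n) (single m 1) = 0 := by
  -- Writing `single i c` as `c • Finsupp.basisSingleOne i` makes the basis vectors atoms for `module`,
  -- once `ring_nf` has brought their indices to a common normal form.
  have single_eq_smul (i : ℤ) (c : ℂ) : single i c = c • Finsupp.basisSingleOne i := by simp
  have even_four : Even (4 : ℤ) := by decide
  rcases em (Even n) with hn | hn <;> rcases em (Even m) with hm | hm <;>
    rcases em (Even p) with hp | hp <;>
  · simp only [ellC, ← Int.not_even_iff_odd, Int.even_add, Int.even_sub, even_two, even_four, hn, hm, hp,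
      map_add, map_neg, LinearMap.add_apply, LinearMap.neg_apply, brₗ_single_single,
      ite_true, ite_false, iff_true, iff_false, not_true, not_false_eq_true]
    simp only [single_eq_smul]
    push_cast
    ring_nf
    module

/-- For all `e₁, e₂ ∈ ℂ`, the elliptic bracket satisfies the Jacobi identity. -/
theorem elliptic_jacobi (e₁ e₂ : ℂ) (x y z : ℤ →₀ ℂ) :
    br (ellC e₁ e₂) (br (ellC e₁ e₂) x y) z + br (ellC e₁ e₂) (br (ellC e₁ e₂) y z) x
      + br (ellC e₁ e₂) (br (ellC e₁ e₂) z x) y = 0 := by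
  simp only [br_eq_brₗ]
  refine jacobi_of_basis Finsupp.basisSingleOne _ (fun n m p => ?_) x y z
  simpa [brₗ_single_single] using jacobi_ellC_single e₁ e₂ n m p
end
end

section
/- For any α ∈ ℂ, the bracket defined on the free ℂ-vector space with basis {V_n : n ∈ ℤ} by: [V_n,V_m] = (m−n)V_{n+m} if n,m both odd; [V_n,V_m] = (m−n)(V_{n+m} + α²V_{n+m−2}) if n,m both even; and [V_n,V_m] = (m−n)V_{n+m} + (m−n−1)α²V_{n+m−2} if n odd and m even (extended skew-symmetrically), satisfies the Jacobi identity. -/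
/-!
The Jacobiator `J x y z` of a bilinear bracket is trilinear and invariant under cyclic
permutations of its arguments, so it vanishes as soon as it vanishes on triples of basis
vectors `V_n, V_m, V_p`. For the Krichever–Novikov structure constants this is a finite check:
after splitting on the parities of `n, m, p`, every term lives in degree `n + m + p`,
`n + m + p - 2` or `n + m + p - 4`, and in each degree the coefficients cancel as
polynomials in `n, m, p, α`.
-/

noncomputable section

/-- Structure constants of the genus-zero three-point Krichever-Novikov vector field
algebra (poles at `∞, α, -α`), extended skew-symmetrically by parity of the indices. -/
def knC (α : ℂ) (n m : ℤ) : ℤ →₀ ℂ :=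
  if Odd n then
    if Odd m then
      Finsupp.single (n + m) ((m : ℂ) - n)
    else
      Finsupp.single (n + m) ((m : ℂ) - n)
        + Finsupp.single (n + m - 2) (((m : ℂ) - n - 1) * α ^ 2)
  else
    if Odd m then
      -(Finsupp.single (n + m) ((n : ℂ) - m)
        + Finsupp.single (n + m - 2) (((n : ℂ) - m - 1) * α ^ 2))
    else
      Finsupp.single (n + m) ((m : ℂ) - n)
        + Finsupp.single (n + m - 2) (((m : ℂ) - n) * α ^ 2)

open Finsupp

namespace br

variable (C : ℤ → ℤ → (ℤ →₀ ℂ))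

lemma add_left (x x' y : ℤ →₀ ℂ) : br C (x + x') y = br C x y + br C x' y := by
  unfold br
  rw [sum_add_index']
  · intro n; simp
  · intro n a a'
    rw [← sum_add]
    exact sum_congr fun m _ => by rw [add_mul, add_smul]

lemma add_right (x y y' : ℤ →₀ ℂ) : br C x (y + y') = br C x y + br C x y' := by
  unfold br
  rw [← sum_add]
  refine sum_congr fun n _ => ?_
  rw [sum_add_index']
  · intro m; simp
  · intro m b b'; rw [mul_add, add_smul]

lemma smul_left (s : ℂ) (x y : ℤ →₀ ℂ) : br C (s • x) y = s • br C x y := by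
  unfold br
  rw [sum_smul_index' (by simp), smul_sum]
  refine sum_congr fun n _ => ?_
  rw [smul_sum]
  exact sum_congr fun m _ => by rw [smul_smul, smul_eq_mul, mul_assoc]

lemma smul_right (s : ℂ) (x y : ℤ →₀ ℂ) : br C x (s • y) = s • br C x y := by
  unfold br
  rw [smul_sum]
  refine sum_congr fun n _ => ?_
  rw [sum_smul_index' (by simp), smul_sum]
  exact sum_congr fun m _ => by rw [smul_smul, smul_eq_mul, mul_left_comm]

lemma neg_left (x y : ℤ →₀ ℂ) : br C (-x) y = -br C x y := by
  simpa using smul_left C (-1) x y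

lemma single_single (n m : ℤ) (a b : ℂ) :
    br C (single n a) (single m b) = (a * b) • C n m := by
  unfold br
  rw [sum_single_index (by simp), sum_single_index (by simp)]

end br

def jacobiator (C : ℤ → ℤ → (ℤ →₀ ℂ)) (x y z : ℤ →₀ ℂ) : ℤ →₀ ℂ :=
  br C (br C x y) z + br C (br C y z) x + br C (br C z x) y

namespace jacobiator

variable (C : ℤ → ℤ → (ℤ →₀ ℂ))

lemma cycle (x y z : ℤ →₀ ℂ) : jacobiator C x y z = jacobiator C y z x := by
  unfold jacobiator; abel

lemma add_left (x x' y z : ℤ →₀ ℂ) :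
    jacobiator C (x + x') y z = jacobiator C x y z + jacobiator C x' y z := by
  simp only [jacobiator, br.add_left, br.add_right]; abel

lemma smul_left (s : ℂ) (x y z : ℤ →₀ ℂ) :
    jacobiator C (s • x) y z = s • jacobiator C x y z := by
  simp only [jacobiator, br.smul_left, br.smul_right, smul_add]

lemma eq_zero_of_single_left {y z : ℤ →₀ ℂ} (h : ∀ n, jacobiator C (single n 1) y z = 0)
    (x : ℤ →₀ ℂ) : jacobiator C x y z = 0 := by
  induction x using Finsupp.induction_linear with
  | zero => simp [jacobiator, br]
  | add x x' hx hx' => rw [add_left, hx, hx', add_zero]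
  | single n a => rw [← smul_single_one, smul_left, h, smul_zero]

lemma eq_zero_of_basis
    (h : ∀ n m p, jacobiator C (single n 1) (single m 1) (single p 1) = 0)
    (x y z : ℤ →₀ ℂ) : jacobiator C x y z = 0 := by
  refine eq_zero_of_single_left C (fun n => ?_) x
  rw [cycle]
  refine eq_zero_of_single_left C (fun m => ?_) y
  rw [cycle]
  refine eq_zero_of_single_left C (fun p => ?_) z
  exact h p n m

end jacobiator

set_option maxHeartbeats 1000000 in
lemma knC_jacobiator_basis (α : ℂ) (n m p : ℤ) :
    jacobiator (knC α) (single n 1) (single m 1) (single p 1) = 0 := by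
  simp only [jacobiator, br.single_single, one_mul, one_smul]
  rcases Int.emod_two_eq_zero_or_one n with hn | hn <;>
    rcases Int.emod_two_eq_zero_or_one m with hm | hm <;>
    rcases Int.emod_two_eq_zero_or_one p with hp | hp <;>
  -- expand `[V_n, V_m]`, then the brackets of its one or two components with `V_p`
  · simp only [knC, Int.odd_iff]
    split_ifs <;> try (exfalso; omega)
    simp only [br.add_left, br.neg_left, br.single_single, mul_one]
    simp only [knC, Int.odd_iff]
    split_ifs <;> try (exfalso; omega)
    ext q
    simp only [coe_add, coe_neg, coe_smul, Pi.add_apply, Pi.neg_apply, Pi.smul_apply,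
      single_apply, coe_zero, Pi.zero_apply, smul_eq_mul, mul_ite, mul_zero, mul_neg]
    ring_nf
    split_ifs <;> first | (exfalso; omega) | (push_cast; ring)

/-- For any `α ∈ ℂ`, the bracket satisfies the Jacobi identity. -/
theorem kn_jacobi (α : ℂ) (x y z : ℤ →₀ ℂ) :
    br (knC α) (br (knC α) x y) z + br (knC α) (br (knC α) y z) x
      + br (knC α) (br (knC α) z x) y = 0 :=
  jacobiator.eq_zero_of_basis (knC α) (knC_jacobiator_basis α) x y z
end
end

section
/- The vector fields on ℂ given by V_{2k} = z(z−α)^k(z+α)^k d/dz and V_{2k+1} = (z−α)^{k+1}(z+α)^{k+1} d/dz (for k ∈ ℤ, α ∈ ℂ, α ≠ 0) satisfy the structure equations: [V_n,V_m] = (m−n)V_{n+m} for n,m odd; [V_n,V_m] = (m−n)(V_{n+m} + α²V_{n+m−2}) for n,m even; [V_n,V_m] = (m−n)V_{n+m} + (m−n−1)α²V_{n+m−2} for n odd, m even, where the bracket of vector fields f d/dz, g d/dz is (f g' − g f') d/dz. -/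
noncomputable section

open Polynomial

/-- Derivative of a rational function `f = num/denom`: `(num' · denom - num · denom')/denom²`. -/
def ratDeriv (f : RatFunc ℂ) : RatFunc ℂ :=
  (algebraMap (Polynomial ℂ) (RatFunc ℂ) (derivative f.num)
      * algebraMap (Polynomial ℂ) (RatFunc ℂ) f.denom
    - algebraMap (Polynomial ℂ) (RatFunc ℂ) f.num
      * algebraMap (Polynomial ℂ) (RatFunc ℂ) (derivative f.denom))
    / (algebraMap (Polynomial ℂ) (RatFunc ℂ) f.denom) ^ 2


local notation "am" => algebraMap (Polynomial ℂ) (RatFunc ℂ)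

lemma ratDeriv_div (p q : Polynomial ℂ) (hq : q ≠ 0) :
    ratDeriv (am p / am q)
      = (am (derivative p) * am q - am p * am (derivative q)) / (am q) ^ 2 := by
  set f := am p / am q with hf
  have hdq : am q ≠ 0 := RatFunc.algebraMap_ne_zero hq
  have hdd : am f.denom ≠ 0 := RatFunc.algebraMap_ne_zero f.denom_ne_zero
  have h1 : am f.num * am q = am p * am f.denom := by
    rw [← div_eq_div_iff hdd hdq, f.num_div_denom]
  have hpoly : f.num * q = p * f.denom := by
    apply RatFunc.algebraMap_injective ℂ
    simpa [map_mul] using h1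
  have hpoly' := congrArg derivative hpoly
  rw [derivative_mul, derivative_mul] at hpoly'
  have key : (derivative f.num * f.denom - f.num * derivative f.denom) * q ^ 2
      = (derivative p * q - p * derivative q) * f.denom ^ 2 := by
    linear_combination (f.denom * q) * hpoly' - (derivative f.denom * q + derivative q * f.denom) * hpoly
  rw [ratDeriv, div_eq_div_iff (pow_ne_zero 2 hdd) (pow_ne_zero 2 hdq)]
  have := congrArg am key
  simpa only [map_mul, map_sub, map_pow] using this

lemma ratDeriv_algebraMap (p : Polynomial ℂ) : ratDeriv (am p) = am (derivative p) := by
  have := ratDeriv_div p 1 one_ne_zero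
  simpa using this


lemma ratDeriv_mul (f g : RatFunc ℂ) :
    ratDeriv (f * g) = f * ratDeriv g + g * ratDeriv f := by
  conv_lhs => rw [← f.num_div_denom, ← g.num_div_denom, div_mul_div_comm, ← map_mul, ← map_mul]
  conv_rhs => rw [← f.num_div_denom, ← g.num_div_denom]
  rw [ratDeriv_div _ _ (mul_ne_zero f.denom_ne_zero g.denom_ne_zero),
    ratDeriv_div _ _ f.denom_ne_zero, ratDeriv_div _ _ g.denom_ne_zero]
  have hb : am f.denom ≠ 0 := RatFunc.algebraMap_ne_zero f.denom_ne_zero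
  have hd : am g.denom ≠ 0 := RatFunc.algebraMap_ne_zero g.denom_ne_zero
  simp only [derivative_mul, map_mul, map_add, map_sub]
  set a := am f.num
  set b := am f.denom
  set c := am g.num
  set d := am g.denom
  field_simp
  ring

lemma ratDeriv_one : ratDeriv (1 : RatFunc ℂ) = 0 := by
  have := ratDeriv_algebraMap 1
  simpa using this

lemma ratDeriv_inv (u : RatFunc ℂ) (hu : u ≠ 0) :
    ratDeriv u⁻¹ = -ratDeriv u / u ^ 2 := by
  have h : u * u⁻¹ = 1 := mul_inv_cancel₀ hu
  have h2 := congrArg ratDeriv h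
  rw [ratDeriv_mul, ratDeriv_one] at h2
  rw [eq_div_iff (pow_ne_zero 2 hu)]
  linear_combination u * h2 - ratDeriv u * h

lemma ratDeriv_pow (u : RatFunc ℂ) (n : ℕ) :
    ratDeriv (u ^ n) = n * u ^ (n - 1 : ℤ) * ratDeriv u := by
  induction n with
  | zero => simpa using ratDeriv_one
  | succ k ih =>
    rcases eq_or_ne u 0 with rfl | hu
    · rcases Nat.eq_zero_or_pos k with rfl | hk
      · simp [ratDeriv_mul, ratDeriv_one, pow_succ]
      · simp [zero_pow (Nat.succ_ne_zero k), ratDeriv]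
    · rw [pow_succ, ratDeriv_mul, ih,
        show ((k + 1 : ℕ) : ℤ) - 1 = (k : ℤ) by push_cast; ring,
        zpow_sub_one₀ hu, zpow_natCast]
      push_cast
      field_simp
      ring

lemma ratDeriv_zpow (u : RatFunc ℂ) (hu : u ≠ 0) (k : ℤ) :
    ratDeriv (u ^ k) = (k : RatFunc ℂ) * u ^ (k - 1) * ratDeriv u := by
  obtain ⟨n, rfl | rfl⟩ := k.eq_nat_or_neg
  · rw [zpow_natCast, ratDeriv_pow]; push_cast; ring
  · rw [zpow_neg, zpow_natCast, ratDeriv_inv _ (pow_ne_zero n hu), ratDeriv_pow,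
      show (-(n:ℤ) - 1) = -((n + 1 : ℕ) : ℤ) by push_cast; ring,
      zpow_neg, zpow_natCast, zpow_sub_one₀ hu, zpow_natCast, pow_succ]
    push_cast
    field_simp
    ring

/-- Bracket of vector fields `f d/dz`, `g d/dz`, namely `(f g' - g f') d/dz`. -/
def vfBr (f g : RatFunc ℂ) : RatFunc ℂ := f * ratDeriv g - g * ratDeriv f

/-- `V_{2k} = z (z²-α²)^k d/dz`, `V_{2k+1} = (z²-α²)^{k+1} d/dz`. -/
def V (α : ℂ) (n : ℤ) : RatFunc ℂ :=
  if Even n then RatFunc.X * (RatFunc.X ^ 2 - RatFunc.C (α ^ 2)) ^ (n / 2)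
  else (RatFunc.X ^ 2 - RatFunc.C (α ^ 2)) ^ ((n + 1) / 2)


lemma V_even (α : ℂ) (k : ℤ) :
    V α (2 * k) = RatFunc.X * (RatFunc.X ^ 2 - RatFunc.C (α ^ 2)) ^ k := by
  rw [V, if_pos ⟨k, by ring⟩, Int.mul_ediv_cancel_left _ two_ne_zero]

lemma V_odd (α : ℂ) (k : ℤ) :
    V α (2 * k + 1) = (RatFunc.X ^ 2 - RatFunc.C (α ^ 2)) ^ (k + 1) := by
  rw [V, if_neg (by exact Int.not_even_iff_odd.mpr ⟨k, rfl⟩),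
    show (2 * k + 1 + 1) / 2 = k + 1 by omega]

lemma w_ne_zero (α : ℂ) : RatFunc.X ^ 2 - RatFunc.C (α ^ 2) ≠ 0 := by
  have h : am (Polynomial.X ^ 2 - Polynomial.C (α ^ 2))
      = RatFunc.X ^ 2 - RatFunc.C (α ^ 2) := by
    rw [map_sub, map_pow, RatFunc.algebraMap_X, RatFunc.algebraMap_C]
  rw [← h]
  exact RatFunc.algebraMap_ne_zero (Polynomial.X_pow_sub_C_ne_zero two_pos _)

lemma ratDeriv_w (α : ℂ) :
    ratDeriv (RatFunc.X ^ 2 - RatFunc.C (α ^ 2)) = 2 * RatFunc.X := by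
  have h : am (Polynomial.X ^ 2 - Polynomial.C (α ^ 2))
      = RatFunc.X ^ 2 - RatFunc.C (α ^ 2) := by
    rw [map_sub, map_pow, RatFunc.algebraMap_X, RatFunc.algebraMap_C]
  rw [← h, ratDeriv_algebraMap, derivative_sub, Polynomial.derivative_C,
    Polynomial.derivative_X_pow]
  push_cast
  simp [RatFunc.algebraMap_X, RatFunc.algebraMap_C, map_ofNat, mul_comm]

lemma ratDeriv_X : ratDeriv (RatFunc.X : RatFunc ℂ) = 1 := by
  rw [← RatFunc.algebraMap_X, ratDeriv_algebraMap]
  simp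

lemma hC' : ∀ k : ℤ, RatFunc.C ((k : ℂ)) = ((k : ℤ) : RatFunc ℂ) := fun k => map_intCast _ k


/-- The vector fields `V_n` satisfy the Krichever-Novikov structure equations. -/
theorem V_structure (α : ℂ) (hα : α ≠ 0) :
    (∀ n m : ℤ, Odd n → Odd m →
      vfBr (V α n) (V α m) = RatFunc.C ((m : ℂ) - n) * V α (n + m)) ∧
    (∀ n m : ℤ, Even n → Even m →
      vfBr (V α n) (V α m)
        = RatFunc.C ((m : ℂ) - n) * (V α (n + m) + RatFunc.C (α ^ 2) * V α (n + m - 2))) ∧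
    (∀ n m : ℤ, Odd n → Even m →
      vfBr (V α n) (V α m)
        = RatFunc.C ((m : ℂ) - n) * V α (n + m)
          + RatFunc.C (((m : ℂ) - n - 1) * α ^ 2) * V α (n + m - 2)) := by
  have hw := w_ne_zero α
  have hw2 : RatFunc.X ^ 2 - RatFunc.C α ^ 2 ≠ 0 := by rw [← map_pow]; exact hw
  refine ⟨?_, ?_, ?_⟩
  · rintro n m ⟨a, rfl⟩ ⟨b, rfl⟩
    rw [show (2*a+1 : ℤ) = 2*a+1 by ring, show (2*b+1 : ℤ) = 2*b+1 by ring,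
      V_odd, V_odd, show (2*a+1) + (2*b+1) = 2*(a+b+1) by ring, V_even,
      show ((2*b+1 : ℤ) : ℂ) - ((2*a+1 : ℤ) : ℂ) = ((2*(b-a) : ℤ) : ℂ) by push_cast; ring, hC']
    rw [vfBr, ratDeriv_zpow _ hw, ratDeriv_zpow _ hw, ratDeriv_w]
    simp only [zpow_add₀ hw, zpow_sub_one₀ hw, zpow_one]
    field_simp [hw, hw2]
    push_cast
    ring
  · rintro n m ⟨a, rfl⟩ ⟨b, rfl⟩
    rw [show (a + a : ℤ) = 2*a by ring, show (b + b : ℤ) = 2*b by ring,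
      V_even, V_even, show (2*a) + (2*b) - 2 = 2*(a+b-1) by ring, V_even,
      show (2*a) + (2*b) = 2*(a+b) by ring, V_even,
      show ((2*b : ℤ) : ℂ) - ((2*a : ℤ) : ℂ) = ((2*(b-a) : ℤ) : ℂ) by push_cast; ring, hC']
    rw [vfBr, ratDeriv_mul, ratDeriv_mul, ratDeriv_zpow _ hw, ratDeriv_zpow _ hw,
      ratDeriv_w, ratDeriv_X]
    simp only [zpow_add₀ hw, zpow_sub_one₀ hw, zpow_one]
    field_simp [hw, hw2]
    push_cast
    ring
  · rintro n m ⟨a, rfl⟩ ⟨b, rfl⟩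
    rw [show (b + b : ℤ) = 2*b by ring, V_odd, V_even,
      show (2*a+1) + (2*b) - 2 = 2*(a+b-1)+1 by ring, V_odd,
      show (2*a+1) + (2*b) = 2*(a+b)+1 by ring, V_odd,
      show (((2*b : ℤ) : ℂ) - ((2*a+1 : ℤ) : ℂ) - 1) * α^2
        = ((2*(b-a-1) : ℤ) : ℂ) * α^2 by push_cast; ring,
      show ((2*b : ℤ) : ℂ) - ((2*a+1 : ℤ) : ℂ) = ((2*(b-a)-1 : ℤ) : ℂ) by push_cast; ring, hC']
    rw [vfBr, ratDeriv_mul, ratDeriv_zpow _ hw, ratDeriv_zpow _ hw,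
      ratDeriv_w, ratDeriv_X, map_mul, hC']
    simp only [zpow_add₀ hw, zpow_sub_one₀ hw, zpow_one]
    field_simp [hw, hw2]
    push_cast
    ring
end
end

section
/- For (e₁,e₂) ∈ ℂ² with (e₁,e₂) ≠ (0,0) and (e₁,e₂) not on the punctured lines e₂ = e₁, e₂ = −e₁/2, e₂ = −2e₁ (or even in general for the family defined by the structure constants), the Lie algebra L^{(e₁,e₂)} with basis {V_n : n ∈ ℤ} and the elliptic structure equations is not isomorphic to the Witt algebra. Specifically: there is no Lie algebra isomorphism Φ : W → L^{(e₁,e₂)}. -/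
noncomputable section

/-- Structure constants of the Witt algebra: `[l_n, l_m] = (m - n) l_{n+m}`. -/
def wittC (n m : ℤ) : ℤ →₀ ℂ := Finsupp.single (n + m) ((m : ℂ) - (n : ℂ))

namespace NW

/-- `α = (e₁-e₂)(e₁-e₃)` with `e₃ = -(e₁+e₂)`. -/
def al (e₁ e₂ : ℂ) : ℂ := (e₁ - e₂) * (e₁ - (-(e₁ + e₂)))

/-- offset-2 structure coefficient. -/
def c2 (e₁ : ℂ) (n m : ℤ) : ℂ :=
  (if Odd n then (if Odd m then 0 else (m : ℂ) - n - 1)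
   else (if Odd m then (m : ℂ) - n + 1 else (m : ℂ) - n)) * (3 * e₁)

/-- offset-4 structure coefficient. -/
def c4 (e₁ e₂ : ℂ) (n m : ℤ) : ℂ :=
  (if Odd n then (if Odd m then 0 else (m : ℂ) - n - 2)
   else (if Odd m then (m : ℂ) - n + 2 else (m : ℂ) - n)) * al e₁ e₂

lemma ellC_eq (e₁ e₂ : ℂ) (n m : ℤ) :
    ellC e₁ e₂ n m = Finsupp.single (n + m) ((m : ℂ) - n)
      + Finsupp.single (n + m - 2) (c2 e₁ n m)
      + Finsupp.single (n + m - 4) (c4 e₁ e₂ n m) := by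
  unfold ellC c2 c4 al
  by_cases hn : Odd n <;> by_cases hm : Odd m <;>
    simp only [hn, hm, if_true, if_false, zero_mul, Finsupp.single_zero, add_zero, neg_add]
  · rw [← Finsupp.single_neg, ← Finsupp.single_neg, ← Finsupp.single_neg]
    congr 1
    · congr 1
      · exact congrArg _ (by ring)
      · exact congrArg _ (by ring)
    · exact congrArg _ (by ring)

lemma ellC_apply (e₁ e₂ : ℂ) (n m D : ℤ) :
    (ellC e₁ e₂ n m) D = (if D = n + m then (m : ℂ) - n else 0)
      + (if D = n + m - 2 then c2 e₁ n m else 0)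
      + (if D = n + m - 4 then c4 e₁ e₂ n m else 0) := by
  rw [ellC_eq]
  simp only [Finsupp.add_apply, Finsupp.single_apply]
  congr 1 <;> [skip; exact if_congr (by omega) rfl rfl]
  congr 1 <;> exact if_congr (by omega) rfl rfl

/-- reduce a finsupp-sum to a sum over an explicit finite window. -/
lemma sum_window (x : ℤ →₀ ℂ) (F : ℤ → ℂ → ℂ) (W : Finset ℤ)
    (h0 : ∀ n, F n 0 = 0) (hW : ∀ n, n ∉ W → F n (x n) = 0) :
    x.sum F = ∑ n ∈ W, F n (x n) := by
  rw [Finsupp.sum]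
  rw [← Finset.sum_subset (Finset.inter_subset_left (s₂ := W))
      (fun n hn hn' => by
        by_cases h : n ∈ W
        · exact absurd (Finset.mem_inter.mpr ⟨hn, h⟩) hn'
        · exact hW n h)]
  refine Finset.sum_subset Finset.inter_subset_right (fun n hn hn' => ?_)
  have : n ∉ x.support := fun hs => hn' (Finset.mem_inter.mpr ⟨hs, hn⟩)
  rw [Finsupp.notMem_support_iff.mp this, h0]

lemma br_apply (C : ℤ → ℤ → (ℤ →₀ ℂ)) (x y : ℤ →₀ ℂ) (D : ℤ) :
    (br C x y) D = x.sum fun n a => y.sum fun m b => (a * b) * (C n m) D := by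
  unfold br
  simp only [Finsupp.sum_apply, Finsupp.smul_apply, smul_eq_mul]

/-- inner sum evaluation. -/
lemma inner_eval (e₁ e₂ : ℂ) (y : ℤ →₀ ℂ) (n D : ℤ) (a : ℂ) :
    (y.sum fun m b => (a * b) * (ellC e₁ e₂ n m) D)
      = a * (y (D - n) * (((D - n : ℤ) : ℂ) - n))
        + a * (y (D + 2 - n) * c2 e₁ n (D + 2 - n))
        + a * (y (D + 4 - n) * c4 e₁ e₂ n (D + 4 - n)) := by
  rw [sum_window y _ ({D - n, D + 2 - n, D + 4 - n} : Finset ℤ)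
    (fun m => by ring)
    (fun m hm => by
      have h1 : D ≠ n + m := by simp at hm; omega
      have h2 : D ≠ n + m - 2 := by simp at hm; omega
      have h3 : D ≠ n + m - 4 := by simp at hm; omega
      rw [ellC_apply, if_neg h1, if_neg h2, if_neg h3]; ring)]
  rw [Finset.sum_insert (by intro hmem; simp at hmem; all_goals omega),
    Finset.sum_insert (by intro hmem; simp at hmem; all_goals omega), Finset.sum_singleton]
  have E1 : (ellC e₁ e₂ n (D - n)) D = ((D - n : ℤ) : ℂ) - n := by
    rw [ellC_apply]; split_ifs <;> first | ring1 | (exfalso; omega)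
  have E2 : (ellC e₁ e₂ n (D + 2 - n)) D = c2 e₁ n (D + 2 - n) := by
    rw [ellC_apply]; split_ifs <;> first | ring1 | (exfalso; omega)
  have E3 : (ellC e₁ e₂ n (D + 4 - n)) D = c4 e₁ e₂ n (D + 4 - n) := by
    rw [ellC_apply]; split_ifs <;> first | ring1 | (exfalso; omega)
  rw [E1, E2, E3]
  ring


lemma coeff_bot0 (e₁ e₂ : ℂ) (x y : ℤ →₀ ℂ) (b s : ℤ)
    (hx : ∀ k, k < b → x k = 0) (hy : ∀ k, k < s → y k = 0) :
    (br (ellC e₁ e₂) x y) (b + s - 4) = x b * (y (s) * c4 e₁ e₂ b (s)) := by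
  rw [br_apply, sum_window x _ (Finset.Icc b (b + 0))
    (fun n => by rw [inner_eval]; ring)
    (fun n hn => by
      rw [inner_eval]
      rcases lt_or_ge n b with hc | hc
      · rw [hx n hc]; ring
      · have hgt : n > b + 0 := by simp [Finset.mem_Icc] at hn; omega
        rw [hy _ (by omega), hy _ (by omega), hy _ (by omega)]; ring)]
  rw [show Finset.Icc b (b + 0) = ({b} : Finset ℤ) from by
    ext k; simp [Finset.mem_Icc, Finset.mem_insert]; all_goals omega]
  rw [Finset.sum_singleton]
  simp only [inner_eval]
  rw [(show (b + s - 4 - b : ℤ) = s - 4 by ring), (show (b + s - 4 + 2 - b : ℤ) = s - 2 by ring), (show (b + s - 4 + 4 - b : ℤ) = s by ring)]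
  rw [hy (s - 4) (by omega), hy (s - 2) (by omega)]
  ring

lemma coeff_bot1 (e₁ e₂ : ℂ) (x y : ℤ →₀ ℂ) (b s : ℤ)
    (hx : ∀ k, k < b → x k = 0) (hy : ∀ k, k < s → y k = 0) :
    (br (ellC e₁ e₂) x y) (b + s - 4 + 1) = x b * (y (s + 1) * c4 e₁ e₂ b (s + 1)) + x (b + 1) * (y (s) * c4 e₁ e₂ (b + 1) (s)) := by
  rw [br_apply, sum_window x _ (Finset.Icc b (b + 1))
    (fun n => by rw [inner_eval]; ring)
    (fun n hn => by
      rw [inner_eval]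
      rcases lt_or_ge n b with hc | hc
      · rw [hx n hc]; ring
      · have hgt : n > b + 1 := by simp [Finset.mem_Icc] at hn; omega
        rw [hy _ (by omega), hy _ (by omega), hy _ (by omega)]; ring)]
  rw [show Finset.Icc b (b + 1) = ({b, b + 1} : Finset ℤ) from by
    ext k; simp [Finset.mem_Icc, Finset.mem_insert]; all_goals omega]
  rw [Finset.sum_insert (by intro hmem; simp at hmem; all_goals omega)]
  rw [Finset.sum_singleton]
  simp only [inner_eval]
  rw [(show (b + s - 4 + 1 - b : ℤ) = s - 3 by ring), (show (b + s - 4 + 1 + 2 - b : ℤ) = s - 1 by ring), (show (b + s - 4 + 1 + 4 - b : ℤ) = s + 1 by ring), (show (b + s - 4 + 1 - (b + 1) : ℤ) = s - 4 by ring), (show (b + s - 4 + 1 + 2 - (b + 1) : ℤ) = s - 2 by ring), (show (b + s - 4 + 1 + 4 - (b + 1) : ℤ) = s by ring)]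
  rw [hy (s - 4) (by omega), hy (s - 3) (by omega), hy (s - 2) (by omega), hy (s - 1) (by omega)]
  ring

lemma coeff_bot2 (e₁ e₂ : ℂ) (x y : ℤ →₀ ℂ) (b s : ℤ)
    (hx : ∀ k, k < b → x k = 0) (hy : ∀ k, k < s → y k = 0) :
    (br (ellC e₁ e₂) x y) (b + s - 4 + 2) = x b * (y (s) * c2 e₁ b (s)) + x b * (y (s + 2) * c4 e₁ e₂ b (s + 2)) + x (b + 1) * (y (s + 1) * c4 e₁ e₂ (b + 1) (s + 1)) + x (b + 2) * (y (s) * c4 e₁ e₂ (b + 2) (s)) := by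
  rw [br_apply, sum_window x _ (Finset.Icc b (b + 2))
    (fun n => by rw [inner_eval]; ring)
    (fun n hn => by
      rw [inner_eval]
      rcases lt_or_ge n b with hc | hc
      · rw [hx n hc]; ring
      · have hgt : n > b + 2 := by simp [Finset.mem_Icc] at hn; omega
        rw [hy _ (by omega), hy _ (by omega), hy _ (by omega)]; ring)]
  rw [show Finset.Icc b (b + 2) = ({b, b + 1, b + 2} : Finset ℤ) from by
    ext k; simp [Finset.mem_Icc, Finset.mem_insert]; all_goals omega]
  rw [Finset.sum_insert (by intro hmem; simp at hmem; all_goals omega)]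
  rw [Finset.sum_insert (by intro hmem; simp at hmem; all_goals omega)]
  rw [Finset.sum_singleton]
  simp only [inner_eval]
  rw [(show (b + s - 4 + 2 - b : ℤ) = s - 2 by ring), (show (b + s - 4 + 2 + 2 - b : ℤ) = s by ring), (show (b + s - 4 + 2 + 4 - b : ℤ) = s + 2 by ring), (show (b + s - 4 + 2 - (b + 1) : ℤ) = s - 3 by ring), (show (b + s - 4 + 2 + 2 - (b + 1) : ℤ) = s - 1 by ring), (show (b + s - 4 + 2 + 4 - (b + 1) : ℤ) = s + 1 by ring), (show (b + s - 4 + 2 - (b + 2) : ℤ) = s - 4 by ring), (show (b + s - 4 + 2 + 2 - (b + 2) : ℤ) = s - 2 by ring), (show (b + s - 4 + 2 + 4 - (b + 2) : ℤ) = s by ring)]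
  rw [hy (s - 4) (by omega), hy (s - 3) (by omega), hy (s - 2) (by omega), hy (s - 1) (by omega)]
  ring

lemma coeff_bot3 (e₁ e₂ : ℂ) (x y : ℤ →₀ ℂ) (b s : ℤ)
    (hx : ∀ k, k < b → x k = 0) (hy : ∀ k, k < s → y k = 0) :
    (br (ellC e₁ e₂) x y) (b + s - 4 + 3) = x b * (y (s + 1) * c2 e₁ b (s + 1)) + x b * (y (s + 3) * c4 e₁ e₂ b (s + 3)) + x (b + 1) * (y (s) * c2 e₁ (b + 1) (s)) + x (b + 1) * (y (s + 2) * c4 e₁ e₂ (b + 1) (s + 2)) + x (b + 2) * (y (s + 1) * c4 e₁ e₂ (b + 2) (s + 1)) + x (b + 3) * (y (s) * c4 e₁ e₂ (b + 3) (s)) := by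
  rw [br_apply, sum_window x _ (Finset.Icc b (b + 3))
    (fun n => by rw [inner_eval]; ring)
    (fun n hn => by
      rw [inner_eval]
      rcases lt_or_ge n b with hc | hc
      · rw [hx n hc]; ring
      · have hgt : n > b + 3 := by simp [Finset.mem_Icc] at hn; omega
        rw [hy _ (by omega), hy _ (by omega), hy _ (by omega)]; ring)]
  rw [show Finset.Icc b (b + 3) = ({b, b + 1, b + 2, b + 3} : Finset ℤ) from by
    ext k; simp [Finset.mem_Icc, Finset.mem_insert]; all_goals omega]
  rw [Finset.sum_insert (by intro hmem; simp at hmem; all_goals omega)]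
  rw [Finset.sum_insert (by intro hmem; simp at hmem; all_goals omega)]
  rw [Finset.sum_insert (by intro hmem; simp at hmem; all_goals omega)]
  rw [Finset.sum_singleton]
  simp only [inner_eval]
  rw [(show (b + s - 4 + 3 - b : ℤ) = s - 1 by ring), (show (b + s - 4 + 3 + 2 - b : ℤ) = s + 1 by ring), (show (b + s - 4 + 3 + 4 - b : ℤ) = s + 3 by ring), (show (b + s - 4 + 3 - (b + 1) : ℤ) = s - 2 by ring), (show (b + s - 4 + 3 + 2 - (b + 1) : ℤ) = s by ring), (show (b + s - 4 + 3 + 4 - (b + 1) : ℤ) = s + 2 by ring), (show (b + s - 4 + 3 - (b + 2) : ℤ) = s - 3 by ring), (show (b + s - 4 + 3 + 2 - (b + 2) : ℤ) = s - 1 by ring), (show (b + s - 4 + 3 + 4 - (b + 2) : ℤ) = s + 1 by ring), (show (b + s - 4 + 3 - (b + 3) : ℤ) = s - 4 by ring), (show (b + s - 4 + 3 + 2 - (b + 3) : ℤ) = s - 2 by ring), (show (b + s - 4 + 3 + 4 - (b + 3) : ℤ) = s by ring)]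
  rw [hy (s - 4) (by omega), hy (s - 3) (by omega), hy (s - 2) (by omega), hy (s - 1) (by omega)]
  ring

lemma coeff_bot4 (e₁ e₂ : ℂ) (x y : ℤ →₀ ℂ) (b s : ℤ)
    (hx : ∀ k, k < b → x k = 0) (hy : ∀ k, k < s → y k = 0) :
    (br (ellC e₁ e₂) x y) (b + s - 4 + 4) = x b * (y (s) * (((s : ℤ) : ℂ) - ((b : ℤ) : ℂ))) + x b * (y (s + 2) * c2 e₁ b (s + 2)) + x b * (y (s + 4) * c4 e₁ e₂ b (s + 4)) + x (b + 1) * (y (s + 1) * c2 e₁ (b + 1) (s + 1)) + x (b + 1) * (y (s + 3) * c4 e₁ e₂ (b + 1) (s + 3)) + x (b + 2) * (y (s) * c2 e₁ (b + 2) (s)) + x (b + 2) * (y (s + 2) * c4 e₁ e₂ (b + 2) (s + 2)) + x (b + 3) * (y (s + 1) * c4 e₁ e₂ (b + 3) (s + 1)) + x (b + 4) * (y (s) * c4 e₁ e₂ (b + 4) (s)) := by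
  rw [br_apply, sum_window x _ (Finset.Icc b (b + 4))
    (fun n => by rw [inner_eval]; ring)
    (fun n hn => by
      rw [inner_eval]
      rcases lt_or_ge n b with hc | hc
      · rw [hx n hc]; ring
      · have hgt : n > b + 4 := by simp [Finset.mem_Icc] at hn; omega
        rw [hy _ (by omega), hy _ (by omega), hy _ (by omega)]; ring)]
  rw [show Finset.Icc b (b + 4) = ({b, b + 1, b + 2, b + 3, b + 4} : Finset ℤ) from by
    ext k; simp [Finset.mem_Icc, Finset.mem_insert]; all_goals omega]
  rw [Finset.sum_insert (by intro hmem; simp at hmem; all_goals omega)]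
  rw [Finset.sum_insert (by intro hmem; simp at hmem; all_goals omega)]
  rw [Finset.sum_insert (by intro hmem; simp at hmem; all_goals omega)]
  rw [Finset.sum_insert (by intro hmem; simp at hmem; all_goals omega)]
  rw [Finset.sum_singleton]
  simp only [inner_eval]
  rw [(show (b + s - 4 + 4 - b : ℤ) = s by ring), (show (b + s - 4 + 4 + 2 - b : ℤ) = s + 2 by ring), (show (b + s - 4 + 4 + 4 - b : ℤ) = s + 4 by ring), (show (b + s - 4 + 4 - (b + 1) : ℤ) = s - 1 by ring), (show (b + s - 4 + 4 + 2 - (b + 1) : ℤ) = s + 1 by ring), (show (b + s - 4 + 4 + 4 - (b + 1) : ℤ) = s + 3 by ring), (show (b + s - 4 + 4 - (b + 2) : ℤ) = s - 2 by ring), (show (b + s - 4 + 4 + 2 - (b + 2) : ℤ) = s by ring), (show (b + s - 4 + 4 + 4 - (b + 2) : ℤ) = s + 2 by ring), (show (b + s - 4 + 4 - (b + 3) : ℤ) = s - 3 by ring), (show (b + s - 4 + 4 + 2 - (b + 3) : ℤ) = s - 1 by ring), (show (b + s - 4 + 4 + 4 - (b + 3) : ℤ) = s + 1 by ring), (show (b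 + s - 4 + 4 - (b + 4) : ℤ) = s - 4 by ring), (show (b + s - 4 + 4 + 2 - (b + 4) : ℤ) = s - 2 by ring), (show (b + s - 4 + 4 + 4 - (b + 4) : ℤ) = s by ring)]
  rw [hy (s - 4) (by omega), hy (s - 3) (by omega), hy (s - 2) (by omega), hy (s - 1) (by omega)]
  ring
lemma coeff_low (e₁ e₂ : ℂ) (x y : ℤ →₀ ℂ) (b s : ℤ)
    (hx : ∀ k, k < b → x k = 0) (hy : ∀ k, k < s → y k = 0) (D : ℤ) (hD : D < b + s - 4) :
    (br (ellC e₁ e₂) x y) D = 0 := by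
  rw [br_apply, Finsupp.sum]
  apply Finset.sum_eq_zero
  intro n hn
  rw [inner_eval]
  rcases lt_or_ge n b with hc | hc
  · rw [hx n hc]; ring
  · rw [hy _ (by omega), hy _ (by omega), hy _ (by omega)]; ring

lemma coeff_high (e₁ e₂ : ℂ) (x y : ℤ →₀ ℂ) (p q : ℤ)
    (hx : ∀ k, p < k → x k = 0) (hy : ∀ k, q < k → y k = 0) (D : ℤ) (hD : p + q < D) :
    (br (ellC e₁ e₂) x y) D = 0 := by
  rw [br_apply, Finsupp.sum]
  apply Finset.sum_eq_zero
  intro n hn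
  rw [inner_eval]
  rcases lt_or_ge p n with hc | hc
  · rw [hx n hc]; ring
  · rw [hy _ (by omega), hy _ (by omega), hy _ (by omega)]; ring

lemma coeff_top (e₁ e₂ : ℂ) (x y : ℤ →₀ ℂ) (p q : ℤ)
    (hx : ∀ k, p < k → x k = 0) (hy : ∀ k, q < k → y k = 0) :
    (br (ellC e₁ e₂) x y) (p + q) = x p * (y q * (((q : ℤ) : ℂ) - ((p : ℤ) : ℂ))) := by
  rw [br_apply, sum_window x _ ({p} : Finset ℤ)
    (fun n => by rw [inner_eval]; ring)
    (fun n hn => by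
      rw [inner_eval]
      rcases lt_or_ge p n with hc | hc
      · rw [hx n hc]; ring
      · have : n < p := by simp at hn; omega
        rw [hy _ (by omega), hy _ (by omega), hy _ (by omega)]; ring)]
  rw [Finset.sum_singleton, inner_eval,
    (show (p + q - p : ℤ) = q by ring), (show (p + q + 2 - p : ℤ) = q + 2 by ring),
    (show (p + q + 4 - p : ℤ) = q + 4 by ring), hy (q + 2) (by omega), hy (q + 4) (by omega)]
  ring

lemma c2_oo (e₁ : ℂ) {n m : ℤ} (hn : Odd n) (hm : Odd m) : c2 e₁ n m = 0 := by
  simp [c2, hn, hm]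
lemma c2_oe (e₁ : ℂ) {n m : ℤ} (hn : Odd n) (hm : ¬ Odd m) :
    c2 e₁ n m = ((m : ℂ) - n - 1) * (3 * e₁) := by simp [c2, hn, hm]
lemma c2_eo (e₁ : ℂ) {n m : ℤ} (hn : ¬ Odd n) (hm : Odd m) :
    c2 e₁ n m = ((m : ℂ) - n + 1) * (3 * e₁) := by simp [c2, hn, hm]
lemma c2_ee (e₁ : ℂ) {n m : ℤ} (hn : ¬ Odd n) (hm : ¬ Odd m) :
    c2 e₁ n m = ((m : ℂ) - n) * (3 * e₁) := by simp [c2, hn, hm]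
lemma c4_oo (e₁ e₂ : ℂ) {n m : ℤ} (hn : Odd n) (hm : Odd m) : c4 e₁ e₂ n m = 0 := by
  simp [c4, hn, hm]
lemma c4_oe (e₁ e₂ : ℂ) {n m : ℤ} (hn : Odd n) (hm : ¬ Odd m) :
    c4 e₁ e₂ n m = ((m : ℂ) - n - 2) * al e₁ e₂ := by simp [c4, hn, hm]
lemma c4_eo (e₁ e₂ : ℂ) {n m : ℤ} (hn : ¬ Odd n) (hm : Odd m) :
    c4 e₁ e₂ n m = ((m : ℂ) - n + 2) * al e₁ e₂ := by simp [c4, hn, hm]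
lemma c4_ee (e₁ e₂ : ℂ) {n m : ℤ} (hn : ¬ Odd n) (hm : ¬ Odd m) :
    c4 e₁ e₂ n m = ((m : ℂ) - n) * al e₁ e₂ := by simp [c4, hn, hm]
lemma c4_zero (e₁ e₂ : ℂ) (h : al e₁ e₂ = 0) (n m : ℤ) : c4 e₁ e₂ n m = 0 := by
  simp [c4, h]

lemma br_wittC_single (n m : ℤ) :
    br wittC (Finsupp.single n 1) (Finsupp.single m 1)
      = Finsupp.single (n + m) ((m : ℂ) - n) := by
  unfold br
  rw [Finsupp.sum_single_index (by simp [Finsupp.sum]), Finsupp.sum_single_index (by simp)]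
  simp [wittC]

-- degree helpers
lemma apply_min'_ne (x : ℤ →₀ ℂ) (h : x.support.Nonempty) : x (x.support.min' h) ≠ 0 :=
  Finsupp.mem_support_iff.mp (x.support.min'_mem h)

lemma apply_lt_min' (x : ℤ →₀ ℂ) (h : x.support.Nonempty) (k : ℤ)
    (hk : k < x.support.min' h) : x k = 0 := by
  by_contra hc
  exact absurd (x.support.min'_le k (Finsupp.mem_support_iff.mpr hc)) (by omega)

lemma min'_le_of_ne (x : ℤ →₀ ℂ) (h : x.support.Nonempty) (k : ℤ) (hk : x k ≠ 0) :
    x.support.min' h ≤ k := x.support.min'_le k (Finsupp.mem_support_iff.mpr hk)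

lemma min'_eq_of (x : ℤ →₀ ℂ) (h : x.support.Nonempty) (D₀ : ℤ)
    (h1 : x D₀ ≠ 0) (h2 : ∀ D, D < D₀ → x D = 0) : x.support.min' h = D₀ := by
  have h3 := min'_le_of_ne x h D₀ h1
  have h4 := apply_min'_ne x h
  rcases lt_or_ge (x.support.min' h) D₀ with hc | hc
  · exact absurd (h2 _ hc) h4
  · omega

lemma apply_max'_ne (x : ℤ →₀ ℂ) (h : x.support.Nonempty) : x (x.support.max' h) ≠ 0 :=
  Finsupp.mem_support_iff.mp (x.support.max'_mem h)

lemma apply_gt_max' (x : ℤ →₀ ℂ) (h : x.support.Nonempty) (k : ℤ)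
    (hk : x.support.max' h < k) : x k = 0 := by
  by_contra hc
  exact absurd (x.support.le_max' k (Finsupp.mem_support_iff.mpr hc)) (by omega)

lemma min'_le_max' (x : ℤ →₀ ℂ) (h : x.support.Nonempty) :
    x.support.min' h ≤ x.support.max' h :=
  x.support.min'_le _ (x.support.max'_mem h)

end NW

open NW in
set_option maxHeartbeats 4000000 in
/-- For `(e₁,e₂) ≠ (0,0)` the algebra `L^{(e₁,e₂)}` is not isomorphic to the Witt algebra:
there is no linear bijection intertwining the two brackets. -/
theorem not_isomorphic_to_witt (e₁ e₂ : ℂ) (h : (e₁, e₂) ≠ (0, 0)) :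
    ¬ ∃ Φ : (ℤ →₀ ℂ) ≃ₗ[ℂ] (ℤ →₀ ℂ),
        ∀ x y : ℤ →₀ ℂ, Φ (br wittC x y) = br (ellC e₁ e₂) (Φ x) (Φ y) := by
  rintro ⟨Φ, hΦ⟩
  classical
  set y : ℤ → (ℤ →₀ ℂ) := fun n => Φ (Finsupp.single n 1) with hy_def
  have castz : ∀ k : ℤ, ((k : ℤ) : ℂ) = 0 → k = 0 := fun k hk => by exact_mod_cast hk
  have castne : ∀ k : ℤ, k ≠ 0 → ((k : ℤ) : ℂ) ≠ 0 := fun k hk h' => hk (castz k h')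
  have hy0 : ∀ n, y n ≠ 0 := by
    intro n hn
    have h1 : Finsupp.single n (1 : ℂ) = 0 := Φ.injective (by rw [map_zero]; exact hn)
    exact one_ne_zero (Finsupp.single_eq_zero.mp h1)
  have hrel : ∀ n m : ℤ, br (ellC e₁ e₂) (y n) (y m) = ((m : ℂ) - n) • y (n + m) := by
    intro n m
    have h1 := hΦ (Finsupp.single n 1) (Finsupp.single m 1)
    rw [br_wittC_single] at h1
    rw [← h1, show Finsupp.single (n + m) ((m : ℂ) - n) = ((m : ℂ) - n) • Finsupp.single (n + m) (1 : ℂ) by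
      rw [Finsupp.smul_single, smul_eq_mul, mul_one], map_smul]
  have hkey : ∀ w : ℤ →₀ ℂ, Φ w = w.sum fun n a => a • y n := by
    intro w
    conv_lhs => rw [← Finsupp.sum_single w]
    rw [map_finsuppSum]
    refine Finsupp.sum_congr fun n _ => ?_
    rw [show Finsupp.single n (w n) = (w n) • Finsupp.single n (1:ℂ) by
      rw [Finsupp.smul_single, smul_eq_mul, mul_one], map_smul]
  have hspan : ∀ v : ℤ →₀ ℂ, ∃ w : ℤ →₀ ℂ, v = w.sum fun n a => a • y n :=
    fun v => ⟨Φ.symm v, by rw [← hkey, Φ.apply_symm_apply]⟩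
  have hne : ∀ n, (y n).support.Nonempty := fun n => Finsupp.support_nonempty_iff.mpr (hy0 n)
  set t : ℤ → ℤ := fun n => (y n).support.max' (hne n) with ht_def
  set s : ℤ → ℤ := fun n => (y n).support.min' (hne n) with hs_def
  have ha : ∀ n, y n (t n) ≠ 0 := fun n => apply_max'_ne _ _
  have hu : ∀ n, y n (s n) ≠ 0 := fun n => apply_min'_ne _ _
  have htz : ∀ n k, t n < k → y n k = 0 := fun n k hk => apply_gt_max' _ _ k hk
  have hsz : ∀ n k, k < s n → y n k = 0 := fun n k hk => apply_lt_min' _ _ k hk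
  have hsle : ∀ n, s n ≤ t n := fun n => min'_le_max' _ _
  have heig : ∀ n : ℤ, br (ellC e₁ e₂) (y 0) (y n) = (n : ℂ) • y n := by
    intro n
    have := hrel 0 n
    simpa using this
  set d : ℤ := t 0 with hd_def
  set b : ℤ := s 0 with hb_def
  -- d ≥ 0
  have hd0 : 0 ≤ d := by
    by_contra hc
    push_neg at hc
    have h1 := congrArg (fun v : ℤ →₀ ℂ => v (t 1)) (heig 1)
    simp only [Finsupp.smul_apply, smul_eq_mul, one_mul, Int.cast_one] at h1
    rw [coeff_high e₁ e₂ (y 0) (y 1) d (t 1) (htz 0) (htz 1) (t 1) (by omega)] at h1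
    exact ha 1 h1.symm
  -- d ≥ 1 impossible
  have hd1 : ¬ (1 ≤ d) := by
    intro hc
    have htn : ∀ n : ℤ, t n ≤ d := by
      intro n
      by_cases hn0 : n = 0
      · subst hn0; omega
      rcases le_or_gt (t n) d with h' | h'
      · exact h'
      exfalso
      have h1 := congrArg (fun v : ℤ →₀ ℂ => v (d + t n)) (heig n)
      simp only [Finsupp.smul_apply, smul_eq_mul] at h1
      rw [coeff_top e₁ e₂ (y 0) (y n) d (t n) (htz 0) (htz n)] at h1
      rw [htz n (d + t n) (by omega)] at h1
      have h2 : y 0 d = 0 ∨ (y n (t n) * (((t n : ℤ) : ℂ) - ((d : ℤ) : ℂ)) = 0) :=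
        mul_eq_zero.mp (by rw [h1]; ring)
      rcases h2 with h2 | h2
      · exact ha 0 h2
      rcases mul_eq_zero.mp h2 with h2 | h2
      · exact ha n h2
      have : (((t n - d : ℤ) : ℤ) : ℂ) = 0 := by push_cast; linear_combination h2
      have := castz _ this
      omega
    obtain ⟨w, hw⟩ := hspan (Finsupp.single (d + 1) 1)
    have h1 := congrArg (fun v : ℤ →₀ ℂ => v (d + 1)) hw
    simp only [Finsupp.sum_apply, Finsupp.smul_apply, smul_eq_mul] at h1
    rw [Finsupp.single_eq_same] at h1
    have h2 : (w.sum fun n a => a * y n (d + 1)) = 0 := by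
      rw [Finsupp.sum]
      apply Finset.sum_eq_zero
      intro n _
      rw [htz n (d + 1) (by have := htn n; omega), mul_zero]
    rw [Finsupp.sum] at h1 h2
    rw [h2] at h1
    exact one_ne_zero h1
  have hd : d = 0 := by omega
  have h₀ne : y 0 0 ≠ 0 := by have := ha 0; rwa [← hd_def, hd] at this
  -- top coefficients : (n : ℂ) = t n * y 0 0
  have htopc : ∀ n : ℤ, (n : ℂ) = ((t n : ℤ) : ℂ) * y 0 0 := by
    intro n
    have h1 := congrArg (fun v : ℤ →₀ ℂ => v (0 + t n)) (heig n)
    simp only [Finsupp.smul_apply, smul_eq_mul] at h1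
    have hx0 : ∀ k, (0:ℤ) < k → y 0 k = 0 := by
      intro k hk; exact htz 0 k (by omega)
    rw [coeff_top e₁ e₂ (y 0) (y n) 0 (t n) hx0 (htz n)] at h1
    rw [show (0:ℤ) + t n = t n by ring] at h1
    have h2 : (y 0 0 * (((t n : ℤ) : ℂ) - ((0:ℤ):ℂ)) - (n:ℂ)) * y n (t n) = 0 := by
      linear_combination h1
    rcases mul_eq_zero.mp h2 with h2 | h2
    · push_cast at h2 ⊢
      linear_combination -h2
    · exact absurd h2 (ha n)
  set N : ℤ := t 1 with hN_def
  have hN1 : (1 : ℂ) = ((N : ℤ) : ℂ) * y 0 0 := by simpa using htopc 1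
  have hNne : N ≠ 0 := by
    intro hc
    rw [hc] at hN1
    simp at hN1
  have htN : ∀ n : ℤ, t n = n * N := by
    intro n
    have h1 := htopc n
    have h2 : ((t n : ℤ) : ℂ) = ((n * N : ℤ) : ℂ) := by
      push_cast
      have hy00 : ((t n : ℤ):ℂ) * y 0 0 = (n:ℂ) * (((N:ℤ):ℂ) * y 0 0) := by
        rw [← hN1, mul_one, ← h1]
      have := mul_right_cancel₀ h₀ne (by rw [hy00]; ring : ((t n : ℤ):ℂ) * y 0 0 = ((n:ℂ) * ((N:ℤ):ℂ)) * y 0 0)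
      exact this
    exact_mod_cast h2
  have hble : b ≤ 0 := by have := hsle 0; omega
  -- deep existence
  have hdeepex : ∀ M : ℤ, M ≤ 0 → ∃ n : ℤ, n ≠ 0 ∧ n * N ≤ M := by
    intro M hM
    refine ⟨(M - 1) * N, mul_ne_zero (by omega) hNne, ?_⟩
    have h1 : 1 ≤ N * N := by
      rcases lt_or_gt_of_ne hNne with h' | h' <;> nlinarith
    nlinarith
  have hdeepcontra : (∀ n : ℤ, n ≠ 0 → b - 1 ≤ s n) → False := by
    intro hallb
    obtain ⟨n, hn0, hnN⟩ := hdeepex (b - 2) (by omega)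
    have h1 := hsle n
    rw [htN n] at h1
    have h2 := hallb n hn0
    omega
  by_cases hal : al e₁ e₂ = 0
  · -- CASE II : al = 0, e₁ ≠ 0
    have he1 : e₁ ≠ 0 := by
      intro hc
      have h2 : e₂ * e₂ = 0 := by
        have h3 := hal
        rw [al, hc] at h3
        linear_combination -h3
      have h3 : e₂ = 0 := by rcases mul_eq_zero.mp h2 with h' | h' <;> exact h'
      exact h (by rw [hc, h3])
    have h3e : (3 : ℂ) * e₁ ≠ 0 := by
      intro hc
      rcases mul_eq_zero.mp hc with h' | h'
      · norm_num at h'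
      · exact he1 h'
    have hc4 : ∀ n m : ℤ, c4 e₁ e₂ n m = 0 := fun n m => c4_zero e₁ e₂ hal n m
    have hF0 : ∀ n : ℤ, n ≠ 0 → c2 e₁ b (s n) = 0 := by
      intro n hn0
      have h1 := congrArg (fun v : ℤ →₀ ℂ => v (b + s n - 4 + 2)) (heig n)
      simp only [Finsupp.smul_apply, smul_eq_mul] at h1
      rw [coeff_bot2 e₁ e₂ (y 0) (y n) b (s n) (hsz 0) (hsz n)] at h1
      rw [hsz n (b + s n - 4 + 2) (by omega)] at h1
      simp only [hc4] at h1
      have h2 : y 0 b * (y n (s n) * c2 e₁ b (s n)) = 0 := by linear_combination h1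
      rcases mul_eq_zero.mp h2 with h2 | h2
      · exact absurd h2 (hu 0)
      rcases mul_eq_zero.mp h2 with h2 | h2
      · exact absurd h2 (hu n)
      · exact h2
    by_cases hbodd : Odd b
    · -- b odd : the main degenerate case
      have hb2 : b % 2 = 1 := Int.odd_iff.mp hbodd
      have hb1 : b ≤ -1 := by omega
      have hdich : ∀ n : ℤ, n ≠ 0 → s n % 2 = 1 ∨ s n = b + 1 := by
        intro n hn0
        by_cases hso : Odd (s n)
        · exact Or.inl (Int.odd_iff.mp hso)
        · right
          have h1 := hF0 n hn0
          rw [c2_oe e₁ (n := b) (m := s n) hbodd hso] at h1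
          rcases mul_eq_zero.mp h1 with h1 | h1
          · have h3 : ((s n - b - 1 : ℤ) : ℂ) = 0 := by push_cast; linear_combination h1
            have := castz _ h3; omega
          · exact absurd h1 h3e
      have H12 : ∀ n : ℤ, n ≠ 0 → s n % 2 = 1 → s n ≠ b →
          (y 0 b * y n (s n + 1) + y 0 (b + 1) * y n (s n) = 0) ∧
          (3 * e₁ * (y 0 (b + 1) * y n (s n + 1)) + y 0 b * y n (s n) = 0) := by
        intro n hn0 hs2 hsb
        constructor
        · have h1 := congrArg (fun v : ℤ →₀ ℂ => v (b + s n - 4 + 3)) (heig n)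
          simp only [Finsupp.smul_apply, smul_eq_mul] at h1
          rw [coeff_bot3 e₁ e₂ (y 0) (y n) b (s n) (hsz 0) (hsz n)] at h1
          rw [hsz n (b + s n - 4 + 3) (by omega)] at h1
          simp only [hc4] at h1
          rw [c2_oe e₁ (n := b) (m := s n + 1) hbodd (by rw [Int.odd_iff]; omega),
              c2_eo e₁ (n := b + 1) (m := s n) (by rw [Int.odd_iff]; omega)
                (by rw [Int.odd_iff]; omega)] at h1
          push_cast at h1
          have h2 : ((((s n : ℤ) : ℂ) - b) * (3 * e₁)) *
              (y 0 b * y n (s n + 1) + y 0 (b + 1) * y n (s n)) = 0 := by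
            linear_combination h1
          rcases mul_eq_zero.mp h2 with h2 | h2
          · exfalso
            rcases mul_eq_zero.mp h2 with h2 | h2
            · have h3 : ((s n - b : ℤ) : ℂ) = 0 := by push_cast; linear_combination h2
              have := castz _ h3; omega
            · exact h3e h2
          · exact h2
        · have h1 := congrArg (fun v : ℤ →₀ ℂ => v (b + s n - 4 + 4)) (heig n)
          simp only [Finsupp.smul_apply, smul_eq_mul] at h1
          rw [coeff_bot4 e₁ e₂ (y 0) (y n) b (s n) (hsz 0) (hsz n)] at h1
          rw [hsz n (b + s n - 4 + 4) (by omega)] at h1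
          simp only [hc4] at h1
          rw [c2_oo e₁ (n := b) (m := s n + 2) hbodd (by rw [Int.odd_iff]; omega),
              c2_ee e₁ (n := b + 1) (m := s n + 1) (by rw [Int.odd_iff]; omega)
                (by rw [Int.odd_iff]; omega),
              c2_oo e₁ (n := b + 2) (m := s n) (by rw [Int.odd_iff]; omega)
                (by rw [Int.odd_iff]; omega)] at h1
          push_cast at h1
          have h2 : (((s n : ℤ) : ℂ) - b) *
              (3 * e₁ * (y 0 (b + 1) * y n (s n + 1)) + y 0 b * y n (s n)) = 0 := by
            linear_combination h1
          rcases mul_eq_zero.mp h2 with h2 | h2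
          · exfalso
            have h3 : ((s n - b : ℤ) : ℂ) = 0 := by push_cast; linear_combination h2
            have := castz _ h3; omega
          · exact h2
      obtain ⟨n₀, hn₀0, hn₀N⟩ := hdeepex (b - 2) (by omega)
      have hsn₀ : s n₀ ≤ b - 2 := by have := hsle n₀; rw [htN n₀] at this; omega
      have hs₀2 : s n₀ % 2 = 1 := by rcases hdich n₀ hn₀0 with h' | h' <;> omega
      obtain ⟨H1₀, H2₀⟩ := H12 n₀ hn₀0 hs₀2 (by omega)
      have key : y 0 b * y 0 b = 3 * e₁ * (y 0 (b + 1) * y 0 (b + 1)) := by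
        have h2 : (y 0 b * y 0 b - 3 * e₁ * (y 0 (b + 1) * y 0 (b + 1))) * y n₀ (s n₀) = 0 := by
          linear_combination (y 0 b) * H2₀ - (3 * e₁ * y 0 (b + 1)) * H1₀
        rcases mul_eq_zero.mp h2 with h2 | h2
        · linear_combination h2
        · exact absurd h2 (hu n₀)
      have hb1ne : y 0 (b + 1) ≠ 0 := by
        intro hc
        rw [hc] at key
        have : y 0 b = 0 := by
          rcases mul_eq_zero.mp (by linear_combination key : y 0 b * y 0 b = 0) with h' | h' <;>
            exact h'
        exact hu 0 this
      -- the pair/step lemma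
      have hpair : ∀ k l : ℤ, k ≠ 0 → l ≠ 0 → k ≠ l → s k % 2 = 1 → s l % 2 = 1 →
          s k ≠ b → s l ≠ b → s k ≠ s l → s (k + l) = s k + s l - 1 := by
        intro k l hk0 hl0 hkl hk2 hl2 hkb hlb hkls
        obtain ⟨HK, _⟩ := H12 k hk0 hk2 hkb
        obtain ⟨HL, _⟩ := H12 l hl0 hl2 hlb
        have hM := hrel k l
        have hnz : y (k + l) (s k + s l - 1) ≠ 0 := by
          intro hy0'
          have h1 := congrArg (fun v : ℤ →₀ ℂ => v (s k + s l - 4 + 3)) hM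
          simp only [Finsupp.smul_apply, smul_eq_mul] at h1
          rw [coeff_bot3 e₁ e₂ (y k) (y l) (s k) (s l) (hsz k) (hsz l)] at h1
          simp only [hc4] at h1
          rw [c2_oe e₁ (n := s k) (m := s l + 1) (by rw [Int.odd_iff]; omega)
                (by rw [Int.odd_iff]; omega),
              c2_eo e₁ (n := s k + 1) (m := s l) (by rw [Int.odd_iff]; omega)
                (by rw [Int.odd_iff]; omega)] at h1
          rw [show s k + s l - 4 + 3 = s k + s l - 1 by ring, hy0'] at h1
          push_cast at h1
          have h2 : ((((s l : ℤ) : ℂ) - s k) * (3 * e₁)) *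
              (y 0 (b + 1) * (y k (s k) * y l (s l))) = 0 := by
            linear_combination (-(y 0 b) / 2) * h1
              + (((((s l : ℤ) : ℂ) - s k) * (3 * e₁)) / 2) *
                ((y l (s l)) * HK + (y k (s k)) * HL)
          rcases mul_eq_zero.mp h2 with h2 | h2
          · rcases mul_eq_zero.mp h2 with h2 | h2
            · have h3 : ((s l - s k : ℤ) : ℂ) = 0 := by push_cast; linear_combination h2
              have := castz _ h3; omega
            · exact h3e h2
          rcases mul_eq_zero.mp h2 with h2 | h2
          · exact hb1ne h2
          rcases mul_eq_zero.mp h2 with h2 | h2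
          · exact hu k h2
          · exact hu l h2
        have hlow : ∀ D : ℤ, D < s k + s l - 1 → y (k + l) D = 0 := by
          intro D hD
          have h1 := congrArg (fun v : ℤ →₀ ℂ => v D) hM
          simp only [Finsupp.smul_apply, smul_eq_mul] at h1
          have hz : (br (ellC e₁ e₂) (y k) (y l)) D = 0 := by
            have hcase : D < s k + s l - 4 ∨ D = s k + s l - 4 ∨ D = s k + s l - 4 + 1 ∨
                D = s k + s l - 4 + 2 := by omega
            rcases hcase with h' | h' | h' | h'
            · exact coeff_low e₁ e₂ (y k) (y l) (s k) (s l) (hsz k) (hsz l) D h'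
            · rw [h', coeff_bot0 e₁ e₂ (y k) (y l) (s k) (s l) (hsz k) (hsz l)]
              simp [hc4]
            · rw [h', coeff_bot1 e₁ e₂ (y k) (y l) (s k) (s l) (hsz k) (hsz l)]
              simp [hc4]
            · rw [h', coeff_bot2 e₁ e₂ (y k) (y l) (s k) (s l) (hsz k) (hsz l)]
              simp only [hc4]
              rw [c2_oo e₁ (n := s k) (m := s l) (by rw [Int.odd_iff]; omega)
                (by rw [Int.odd_iff]; omega)]
              ring
          rw [hz] at h1
          have h2 := mul_eq_zero.mp h1.symm
          rcases h2 with h2 | h2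
          · exfalso
            have h3 : ((l - k : ℤ) : ℂ) = 0 := by push_cast; linear_combination h2
            have := castz _ h3; omega
          · exact h2
        exact min'_eq_of (y (k + l)) (hne (k + l)) (s k + s l - 1) hnz hlow
      have hds : ∀ n : ℤ, n ≠ 0 → n * N ≤ b - 2 → s n ≤ b - 2 ∧ s n % 2 = 1 := by
        intro n hn0 hnd
        have h1 := hsle n
        rw [htN n] at h1
        have h2 : s n ≤ b - 2 := by omega
        rcases hdich n hn0 with h' | h'
        · exact ⟨h2, h'⟩
        · omega
      have hup : ∀ j : ℤ, j ≠ 0 → (-j) * N ≤ b - 2 → s j = b := by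
        intro j hj0 hjd
        have hjneg : (-j) * N = -(j * N) := by ring
        have hjN : 2 - b ≤ j * N := by omega
        by_contra hsjb
        rcases hdich j hj0 with hodd | hbp1
        · -- STEP contradiction
          set c₀ : ℤ := min (b - 2) (s j - 1) with hc₀
          set m₀ : ℤ := c₀ * N with hm₀
          have hc₀le : c₀ ≤ b - 2 := min_le_left _ _
          have hc₀le2 : c₀ ≤ s j - 1 := min_le_right _ _
          have hNN : 1 ≤ N * N := by rcases lt_or_gt_of_ne hNne with h' | h' <;> nlinarith
          have hm₀N : m₀ * N ≤ c₀ := by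
            have h2 : m₀ * N = c₀ * (N * N) := by rw [hm₀]; ring
            nlinarith
          have hchain : ∀ K : ℕ, (m₀ - K * j) * N ≤ c₀ ∧
              s (m₀ - K * j) = s m₀ - K * (s j - 1) := by
            intro K
            induction K with
            | zero => refine ⟨by simpa using hm₀N, by simp⟩
            | succ K ih =>
              obtain ⟨ihN, ihs⟩ := ih
              have hKN : (m₀ - ((K : ℕ) + 1 : ℕ) * j) * N ≤ c₀ := by
                have h2 : (m₀ - ((K : ℕ) + 1 : ℕ) * j) * N = (m₀ - K * j) * N - j * N := by
                  push_cast; ring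
                omega
              refine ⟨hKN, ?_⟩
              have hk'0 : (m₀ - ((K : ℕ) + 1 : ℕ) * j) ≠ 0 := by
                intro hc
                rw [hc] at hKN
                simp at hKN
                omega
              obtain ⟨hk's, hk'2⟩ := hds _ hk'0 (by omega)
              have hsc : s (m₀ - ((K : ℕ) + 1 : ℕ) * j) ≤ c₀ := by
                have h9 := hsle (m₀ - ((K : ℕ) + 1 : ℕ) * j)
                rw [htN] at h9
                omega
              have hkj : (m₀ - ((K : ℕ) + 1 : ℕ) * j) ≠ j := by
                intro hc
                rw [hc] at hKN
                omega
              have hstep := hpair (m₀ - ((K : ℕ) + 1 : ℕ) * j) j hk'0 hj0 hkj hk'2 hodd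
                (by omega) hsjb (by omega)
              rw [show (m₀ - ((K : ℕ) + 1 : ℕ) * j) + j = m₀ - K * j by push_cast; ring] at hstep
              push_cast
              push_cast at ihs hstep
              linear_combination ihs - hstep
          have hm₀0 : m₀ ≠ 0 := by
            intro hc
            rw [hc] at hm₀N
            simp at hm₀N
            omega
          have hsm₀ : s m₀ ≤ m₀ * N := by have := hsle m₀; rwa [htN m₀] at this
          have hA : 1 ≤ j * N - s j + 1 := by
            have := hsle j; rw [htN j] at this; omega
          set K : ℕ := (m₀ * N - s m₀ + 1).toNat with hKdef
          have hKc : (K : ℤ) = m₀ * N - s m₀ + 1 := Int.toNat_of_nonneg (by omega)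
          obtain ⟨hbd, hse⟩ := hchain K
          have h1 : s (m₀ - K * j) ≤ (m₀ - K * j) * N := by
            have := hsle (m₀ - K * j); rwa [htN] at this
          rw [hse] at h1
          have h2 : (m₀ - (K : ℤ) * j) * N = m₀ * N - (K : ℤ) * (j * N) := by ring
          rw [h2] at h1
          have h3 : (K : ℤ) * 1 ≤ (K : ℤ) * (j * N - s j + 1) :=
            mul_le_mul_of_nonneg_left hA (by omega)
          nlinarith
        · -- even bottom b+1 kill
          obtain ⟨hks, hk2⟩ := hds (-j) (by omega) hjd
          have h1 := congrArg (fun v : ℤ →₀ ℂ => v (s (-j) + s j - 4 + 2)) (hrel (-j) j)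
          simp only [Finsupp.smul_apply, smul_eq_mul] at h1
          rw [coeff_bot2 e₁ e₂ (y (-j)) (y j) (s (-j)) (s j) (hsz (-j)) (hsz j)] at h1
          simp only [hc4] at h1
          rw [c2_oe e₁ (n := s (-j)) (m := s j) (by rw [Int.odd_iff]; omega)
              (by rw [Int.odd_iff]; omega)] at h1
          rw [show (-j : ℤ) + j = 0 by ring] at h1
          rw [hsz 0 (s (-j) + s j - 4 + 2) (by omega)] at h1
          push_cast at h1
          have h2 : (y (-j) (s (-j)) * y j (s j)) *
              ((((s j : ℤ) : ℂ) - s (-j) - 1) * (3 * e₁)) = 0 := by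
            linear_combination h1
          rcases mul_eq_zero.mp h2 with h2 | h2
          · rcases mul_eq_zero.mp h2 with h2 | h2
            · exact hu (-j) h2
            · exact hu j h2
          rcases mul_eq_zero.mp h2 with h2 | h2
          · have h3 : ((s j - s (-j) - 1 : ℤ) : ℂ) = 0 := by push_cast; linear_combination h2
            have := castz _ h3
            omega
          · exact h3e h2
      have hdsum : ∀ a a' : ℤ, a ≠ 0 → a * N ≤ b - 2 → a' ≠ 0 → a' * N ≤ b - 2 →
          (a + a' ≠ 0 ∧ (a + a') * N ≤ b - 2) := by
        intro a a' ha0 haN ha'0 ha'N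
        have h1 : (a + a') * N = a * N + a' * N := by ring
        constructor
        · intro hc
          rw [hc] at h1
          simp at h1
          omega
        · omega
      have hadd : ∀ a a' : ℤ, a ≠ 0 → a * N ≤ b - 2 → a' ≠ 0 → a' * N ≤ b - 2 →
          s (a + a') = s a + s a' - 1 := by
        intro a a' ha0 haN ha'0 ha'N
        obtain ⟨hs0, hsN⟩ := hdsum a a' ha0 haN ha'0 ha'N
        obtain ⟨has, ha2⟩ := hds a ha0 haN
        obtain ⟨ha's, ha'2⟩ := hds a' ha'0 ha'N
        obtain ⟨hsums, hsum2⟩ := hds _ hs0 hsN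
        by_cases hss : s a = s a'
        · set c : ℤ := min (min (s a) (s (a + a'))) (b - 2) - 1 with hc
          have hcb : c ≤ b - 3 := by omega
          have hNN : 1 ≤ N * N := by rcases lt_or_gt_of_ne hNne with h' | h' <;> nlinarith
          have hcand : ∀ cc : ℤ, cc ≤ c → ((cc * N) * N ≤ cc ∧ cc * N ≠ 0) := by
            intro cc hcc
            constructor
            · have h2 : (cc * N) * N = cc * (N * N) := by ring
              nlinarith
            · exact mul_ne_zero (by omega) hNne
          have hw1 : ∃ ww : ℤ, ww ≠ 0 ∧ ww * N ≤ c ∧ ww ≠ a' - a := by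
            by_cases hcw : c * N = a' - a
            · obtain ⟨hx1, hx2⟩ := hcand (c - 1) (by omega)
              refine ⟨(c - 1) * N, hx2, by omega, ?_⟩
              intro hc2
              rw [← hcw] at hc2
              have : N = 0 := by
                have h4 : ((c - 1) - c) * N = 0 := by rw [sub_mul, hc2]; ring
                simpa using h4
              exact hNne this
            · obtain ⟨hx1, hx2⟩ := hcand c (by omega)
              exact ⟨c * N, hx2, hx1, hcw⟩
          obtain ⟨ww, hw0, hwc, hwa⟩ := hw1
          have hwN' : ww * N ≤ b - 2 := by omega
          obtain ⟨hws, hw2⟩ := hds ww hw0 hwN'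
          have hwsc : s ww ≤ c := by
            have h1 := hsle ww; rw [htN ww] at h1; omega
          have t1 := hpair a ww ha0 hw0
            (by intro hceq; have h9 := hwsc; rw [← hceq] at h9; omega)
            ha2 hw2 (by omega) (by omega) (by omega)
          obtain ⟨haw0, hawN⟩ := hdsum a ww ha0 haN hw0 hwN'
          obtain ⟨haws, haw2⟩ := hds _ haw0 hawN
          have t2 := hpair (a + ww) a' haw0 ha'0
            (by intro hceq; apply hwa; omega)
            haw2 ha'2 (by omega) (by omega) (by omega)
          rw [show a + ww + a' = a + a' + ww by ring] at t2
          have t3 := hpair (a + a') ww hs0 hw0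
            (by intro hceq; have h9 := hwsc; rw [← hceq] at h9; omega)
            hsum2 hw2 (by omega) (by omega) (by omega)
          omega
        · exact hpair a a' ha0 ha'0 (by intro hceq; rw [hceq] at hss; exact hss rfl)
            ha2 ha'2 (by omega) (by omega) hss
      have hmul : ∀ a : ℤ, a ≠ 0 → a * N ≤ b - 2 → ∀ p : ℕ,
          (((p : ℤ) + 1) * a ≠ 0 ∧ (((p : ℤ) + 1) * a) * N ≤ b - 2 ∧
           s (((p : ℤ) + 1) * a) = ((p : ℤ) + 1) * (s a - 1) + 1) := by
        intro a ha0 haN p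
        induction p with
        | zero =>
          simp only [Nat.cast_zero, zero_add, one_mul]
          exact ⟨ha0, haN, by ring⟩
        | succ p ih =>
          obtain ⟨ih0, ihN, ihs⟩ := ih
          have hsplit : (((p + 1 : ℕ) : ℤ) + 1) * a = ((p : ℤ) + 1) * a + a := by
            push_cast; ring
          rw [hsplit]
          obtain ⟨h0', hN'⟩ := hdsum _ a ih0 ihN ha0 haN
          refine ⟨h0', hN', ?_⟩
          rw [hadd _ a ih0 ihN ha0 haN, ihs]
          push_cast
          ring
      have hinj : ∀ a a' : ℤ, a ≠ 0 → a * N ≤ b - 2 → a' ≠ 0 → a' * N ≤ b - 2 →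
          s a = s a' → a = a' := by
        intro a a' ha0 haN ha'0 ha'N hss
        obtain ⟨has, _⟩ := hds a ha0 haN
        have hsgn : (0 < a ∧ N < 0) ∨ (a < 0 ∧ 0 < N) := mul_neg_iff.mp (by omega)
        have hsgn' : (0 < a' ∧ N < 0) ∨ (a' < 0 ∧ 0 < N) := mul_neg_iff.mp (by omega)
        have hidx : (a'.natAbs : ℤ) * a = (a.natAbs : ℤ) * a' := by
          rcases hsgn with ⟨h1, h2⟩ | ⟨h1, h2⟩ <;> rcases hsgn' with ⟨h3, h4⟩ | ⟨h3, h4⟩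
          · rw [show (a'.natAbs : ℤ) = a' by omega, show (a.natAbs : ℤ) = a by omega]; ring
          · omega
          · omega
          · rw [show (a'.natAbs : ℤ) = -a' by omega, show (a.natAbs : ℤ) = -a by omega]; ring
        obtain ⟨_, _, hpa⟩ := hmul a ha0 haN (a'.natAbs - 1)
        obtain ⟨_, _, hpa'⟩ := hmul a' ha'0 ha'N (a.natAbs - 1)
        rw [show ((a'.natAbs - 1 : ℕ) : ℤ) + 1 = (a'.natAbs : ℤ) by omega] at hpa
        rw [show ((a.natAbs - 1 : ℕ) : ℤ) + 1 = (a.natAbs : ℤ) by omega] at hpa'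
        rw [hidx] at hpa
        have h6 := hpa'.symm.trans hpa
        rw [← hss] at h6
        have h5 : ((a.natAbs : ℤ) - a'.natAbs) * (s a - 1) = 0 := by linear_combination h6
        rcases mul_eq_zero.mp h5 with h5 | h5
        · rcases hsgn with ⟨h1, h2⟩ | ⟨h1, h2⟩ <;> rcases hsgn' with ⟨h3, h4⟩ | ⟨h3, h4⟩ <;>
            omega
        · omega
      -- FINAL span contradiction
      have hWne : ((Finset.Icc (b - 1) (1 - b)).image s).Nonempty := by
        refine Finset.Nonempty.image ⟨0, ?_⟩ _
        simp [Finset.mem_Icc]; omega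
      set w₀ : ℤ := ((Finset.Icc (b - 1) (1 - b)).image s).min' hWne with hw₀def
      have hw₀le : ∀ n : ℤ, n ∈ Finset.Icc (b - 1) (1 - b) → w₀ ≤ s n := fun n hn =>
        Finset.min'_le _ _ (Finset.mem_image_of_mem s hn)
      set K : ℤ := 2 * (min b w₀) - 2 with hKdef
      have hKlt : K < b ∧ K ≤ w₀ - 1 ∧ K % 2 = 0 := by
        have h1 : min b w₀ ≤ b := min_le_left _ _
        have h2 : min b w₀ ≤ w₀ := min_le_right _ _
        omega
      have hclass : ∀ n : ℤ, s n ≤ K → (n ≠ 0 ∧ n * N ≤ b - 2) := by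
        intro n hsn
        have hn0 : n ≠ 0 := by
          intro hc
          rw [hc] at hsn
          omega
        refine ⟨hn0, ?_⟩
        by_contra hnd
        push_neg at hnd
        by_cases hnd' : (-n) * N ≤ b - 2
        · have := hup n hn0 hnd'
          omega
        · push_neg at hnd'
          have hflip : (-n) * N = -(n * N) := by ring
          have h2 : |n * N| ≤ 1 - b := by
            rw [abs_le]
            omega
          have h1 : |n| ≤ |n * N| := by
            rw [abs_mul]
            nlinarith [abs_nonneg n, Int.one_le_abs hNne]
          have hmem : n ∈ Finset.Icc (b - 1) (1 - b) := by
            rw [Finset.mem_Icc]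
            rcases abs_cases n with ⟨he, _⟩ | ⟨he, _⟩ <;> omega
          have := hw₀le n hmem
          omega
      obtain ⟨w, hw⟩ := hspan (Finsupp.single K 1)
      have happ : ∀ D : ℤ, (Finsupp.single K (1 : ℂ)) D = ∑ n ∈ w.support, w n * y n D := by
        intro D
        have h1 := congrArg (fun v : ℤ →₀ ℂ => v D) hw
        simpa only [Finsupp.sum_apply, Finsupp.smul_apply, smul_eq_mul, Finsupp.sum,
          Finset.sum_apply'] using h1
      have hwne : w.support.Nonempty := by
        rcases Finset.eq_empty_or_nonempty w.support with he | hne'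
        · exfalso
          have h1 := happ K
          rw [he] at h1
          simp [Finsupp.single_eq_same] at h1
        · exact hne'
      have hbarne : (w.support.image s).Nonempty := hwne.image _
      set sb : ℤ := (w.support.image s).min' hbarne with hsbdef
      have hsble : ∀ n : ℤ, n ∈ w.support → sb ≤ s n := fun n hn =>
        Finset.min'_le _ _ (Finset.mem_image_of_mem s hn)
      obtain ⟨nb, hnbmem, hnbs⟩ := Finset.mem_image.mp ((w.support.image s).min'_mem hbarne)
      rw [← hsbdef] at hnbs
      rcases le_or_gt sb K with hsbK | hsbK
      · obtain ⟨hnb0, hnbd⟩ := hclass nb (by omega)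
        obtain ⟨hnbs', hnb2⟩ := hds nb hnb0 hnbd
        have hsbK' : sb < K := by
          rcases eq_or_lt_of_le hsbK with h' | h'
          · exfalso; omega
          · exact h'
        have h1 := happ sb
        rw [Finsupp.single_apply, if_neg (by omega)] at h1
        have h2 : ∑ n ∈ w.support, w n * y n sb = w nb * y nb sb := by
          apply Finset.sum_eq_single_of_mem nb hnbmem
          intro n hn hne'
          have hle := hsble n hn
          rcases eq_or_lt_of_le hle with h' | h'
          · exfalso
            obtain ⟨hn0, hnd⟩ := hclass n (by omega)
            exact hne' (hinj n nb hn0 hnd hnb0 hnbd (by omega))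
          · rw [hsz n sb h', mul_zero]
        rw [h2] at h1
        rcases mul_eq_zero.mp h1.symm with h' | h'
        · exact (Finsupp.mem_support_iff.mp hnbmem) h'
        · rw [← hnbs] at h'
          exact hu nb h'
      · have h1 := happ K
        rw [Finsupp.single_eq_same] at h1
        have h2 : ∑ n ∈ w.support, w n * y n K = 0 :=
          Finset.sum_eq_zero fun n hn => by
            rw [hsz n K (by have := hsble n hn; omega), mul_zero]
        rw [h2] at h1
        exact one_ne_zero h1
    · -- b even : bottoms pinned near b
      have hb2 : b % 2 = 0 := by rw [Int.odd_iff] at hbodd; omega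
      refine hdeepcontra fun n hn0 => ?_
      have h1 := hF0 n hn0
      by_cases hso : Odd (s n)
      · rw [c2_eo e₁ (n := b) (m := s n) hbodd hso] at h1
        rcases mul_eq_zero.mp h1 with h1 | h1
        · have h3 : ((s n - b + 1 : ℤ) : ℂ) = 0 := by push_cast; linear_combination h1
          have := castz _ h3; omega
        · exact absurd h1 h3e
      · rw [c2_ee e₁ (n := b) (m := s n) hbodd hso] at h1
        rcases mul_eq_zero.mp h1 with h1 | h1
        · have h3 : ((s n - b : ℤ) : ℂ) = 0 := by push_cast; linear_combination h1
          have := castz _ h3; omega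
        · exact absurd h1 h3e
  · -- CASE I : al ≠ 0
    have hE0 : ∀ n : ℤ, n ≠ 0 → c4 e₁ e₂ b (s n) = 0 := by
      intro n hn0
      have h1 := congrArg (fun v : ℤ →₀ ℂ => v (b + s n - 4)) (heig n)
      simp only [Finsupp.smul_apply, smul_eq_mul] at h1
      rw [coeff_bot0 e₁ e₂ (y 0) (y n) b (s n) (hsz 0) (hsz n)] at h1
      rw [hsz n (b + s n - 4) (by omega)] at h1
      have h2 : y 0 b * (y n (s n) * c4 e₁ e₂ b (s n)) = 0 := by rw [h1]; ring
      rcases mul_eq_zero.mp h2 with h2 | h2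
      · exact absurd h2 (hu 0)
      rcases mul_eq_zero.mp h2 with h2 | h2
      · exact absurd h2 (hu n)
      · exact h2
    by_cases hbodd : Odd b
    · -- b odd
      have hb2 : b % 2 = 1 := Int.odd_iff.mp hbodd
      have hb1 : b ≤ -1 := by omega
      have hsodd : ∀ n : ℤ, n ≠ 0 → s n % 2 = 1 := by
        intro n hn0
        by_contra hc
        have hse : ¬ Odd (s n) := by rw [Int.odd_iff]; omega
        have h1 := hE0 n hn0
        rw [c4_oe e₁ e₂ hbodd hse] at h1
        rcases mul_eq_zero.mp h1 with h1 | h1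
        · have h3 : ((s n - b - 2 : ℤ) : ℂ) = 0 := by push_cast; linear_combination h1
          have := castz _ h3
          omega
        · exact hal h1
      obtain ⟨n₀, hn₀0, hn₀N⟩ := hdeepex (b - 2) (by omega)
      have hsn₀ : s n₀ ≤ b - 2 := by have := hsle n₀; rw [htN n₀] at this; omega
      have hs₀2 : s n₀ % 2 = 1 := hsodd n₀ hn₀0
      have hE2 : y 0 (b + 1) * y n₀ (s n₀ + 1) = 0 := by
        have h1 := congrArg (fun v : ℤ →₀ ℂ => v (b + s n₀ - 4 + 2)) (heig n₀)
        simp only [Finsupp.smul_apply, smul_eq_mul] at h1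
        rw [coeff_bot2 e₁ e₂ (y 0) (y n₀) b (s n₀) (hsz 0) (hsz n₀)] at h1
        rw [hsz n₀ (b + s n₀ - 4 + 2) (by omega)] at h1
        rw [c4_oo e₁ e₂ (n := b) (m := s n₀ + 2) hbodd (by rw [Int.odd_iff]; omega),
            c4_ee e₁ e₂ (n := b + 1) (m := s n₀ + 1) (by rw [Int.odd_iff]; omega)
              (by rw [Int.odd_iff]; omega),
            c4_oo e₁ e₂ (n := b + 2) (m := s n₀) (by rw [Int.odd_iff]; omega)
              (by rw [Int.odd_iff]; omega),
            c2_oo e₁ (n := b) (m := s n₀) hbodd (by rw [Int.odd_iff]; omega)] at h1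
        push_cast at h1
        have h2 : (y 0 (b + 1) * y n₀ (s n₀ + 1)) * ((((s n₀ : ℤ) : ℂ) - b) * al e₁ e₂) = 0 := by
          linear_combination h1
        rcases mul_eq_zero.mp h2 with h2 | h2
        · exact h2
        exfalso
        rcases mul_eq_zero.mp h2 with h2 | h2
        · have h3 : ((s n₀ - b : ℤ) : ℂ) = 0 := by push_cast; linear_combination h2
          have := castz _ h3; omega
        · exact hal h2
      have h1b : y 0 (b + 1) = 0 := by
        by_contra hcne
        have hv0 : y n₀ (s n₀ + 1) = 0 := by
          rcases mul_eq_zero.mp hE2 with h' | h'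
          · exact absurd h' hcne
          · exact h'
        have h1 := congrArg (fun v : ℤ →₀ ℂ => v (b + s n₀ - 4 + 1)) (heig n₀)
        simp only [Finsupp.smul_apply, smul_eq_mul] at h1
        rw [coeff_bot1 e₁ e₂ (y 0) (y n₀) b (s n₀) (hsz 0) (hsz n₀)] at h1
        rw [hsz n₀ (b + s n₀ - 4 + 1) (by omega), hv0] at h1
        rw [c4_eo e₁ e₂ (n := b + 1) (m := s n₀) (by rw [Int.odd_iff]; omega) (by rw [Int.odd_iff]; omega)] at h1
        push_cast at h1
        have h2 : (y 0 (b + 1) * y n₀ (s n₀)) * ((((s n₀ : ℤ) : ℂ) - b + 1) * al e₁ e₂) = 0 := by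
          linear_combination h1
        rcases mul_eq_zero.mp h2 with h2 | h2
        · rcases mul_eq_zero.mp h2 with h2 | h2
          · exact hcne h2
          · exact hu n₀ h2
        rcases mul_eq_zero.mp h2 with h2 | h2
        · have h3 : ((s n₀ - b + 1 : ℤ) : ℂ) = 0 := by push_cast; linear_combination h2
          have := castz _ h3; omega
        · exact hal h2
      have hv0 : y n₀ (s n₀ + 1) = 0 := by
        have h1 := congrArg (fun v : ℤ →₀ ℂ => v (b + s n₀ - 4 + 1)) (heig n₀)
        simp only [Finsupp.smul_apply, smul_eq_mul] at h1
        rw [coeff_bot1 e₁ e₂ (y 0) (y n₀) b (s n₀) (hsz 0) (hsz n₀)] at h1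
        rw [hsz n₀ (b + s n₀ - 4 + 1) (by omega), h1b] at h1
        rw [c4_oe e₁ e₂ (n := b) (m := s n₀ + 1) hbodd (by rw [Int.odd_iff]; omega)] at h1
        push_cast at h1
        have h2 : (y 0 b * y n₀ (s n₀ + 1)) * ((((s n₀ : ℤ) : ℂ) - b - 1) * al e₁ e₂) = 0 := by
          linear_combination h1
        rcases mul_eq_zero.mp h2 with h2 | h2
        · rcases mul_eq_zero.mp h2 with h2 | h2
          · exact absurd h2 (hu 0)
          · exact h2
        exfalso
        rcases mul_eq_zero.mp h2 with h2 | h2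
        · have h3 : ((s n₀ - b - 1 : ℤ) : ℂ) = 0 := by push_cast; linear_combination h2
          have := castz _ h3; omega
        · exact hal h2
      -- E4 contradiction
      have h1 := congrArg (fun v : ℤ →₀ ℂ => v (b + s n₀ - 4 + 4)) (heig n₀)
      simp only [Finsupp.smul_apply, smul_eq_mul] at h1
      rw [coeff_bot4 e₁ e₂ (y 0) (y n₀) b (s n₀) (hsz 0) (hsz n₀)] at h1
      rw [hsz n₀ (b + s n₀ - 4 + 4) (by omega), h1b, hv0] at h1
      rw [c2_oo e₁ (n := b) (m := s n₀ + 2) hbodd (by rw [Int.odd_iff]; omega),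
          c2_oo e₁ (n := b + 2) (m := s n₀) (by rw [Int.odd_iff]; omega)
            (by rw [Int.odd_iff]; omega),
          c4_oo e₁ e₂ (n := b) (m := s n₀ + 4) hbodd (by rw [Int.odd_iff]; omega),
          c4_oo e₁ e₂ (n := b + 2) (m := s n₀ + 2) (by rw [Int.odd_iff]; omega)
            (by rw [Int.odd_iff]; omega),
          c4_oo e₁ e₂ (n := b + 4) (m := s n₀) (by rw [Int.odd_iff]; omega)
            (by rw [Int.odd_iff]; omega)] at h1
      push_cast at h1
      have h2 : (y 0 b * y n₀ (s n₀)) * (((s n₀ : ℤ) : ℂ) - b) = 0 := by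
        linear_combination h1
      rcases mul_eq_zero.mp h2 with h2 | h2
      · rcases mul_eq_zero.mp h2 with h2 | h2
        · exact absurd h2 (hu 0)
        · exact absurd h2 (hu n₀)
      · have h3 : ((s n₀ - b : ℤ) : ℂ) = 0 := by push_cast; linear_combination h2
        have := castz _ h3; omega
    · -- b even
      have hb2 : b % 2 = 0 := by rw [Int.odd_iff] at hbodd; omega
      refine hdeepcontra fun n hn0 => ?_
      have h1 := hE0 n hn0
      by_cases hso : Odd (s n)
      · exfalso
        rw [c4_eo e₁ e₂ hbodd hso] at h1
        rcases mul_eq_zero.mp h1 with h1 | h1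
        · have h3 : ((s n - b + 2 : ℤ) : ℂ) = 0 := by push_cast; linear_combination h1
          have := castz _ h3
          rw [Int.odd_iff] at hso
          omega
        · exact hal h1
      · rw [c4_ee e₁ e₂ hbodd hso] at h1
        rcases mul_eq_zero.mp h1 with h1 | h1
        · have h3 : ((s n - b : ℤ) : ℂ) = 0 := by push_cast; linear_combination h1
          have := castz _ h3; omega
        · exact absurd h1 hal
end
end

section
/- For t ∈ ℂ, the bracket on the free ℂ-vector space with basis {l_n : n ≥ 1} defined by [l_n, l_m]_t = (m−n)(l_{n+m} + t l_{n+m−1}) satisfies the Jacobi identity, giving a one-parameter family of Lie algebras deforming L₁. -/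
noncomputable section

/-- Index set for `L₁`: integers `n ≥ 1`. -/
abbrev PosIdx : Type := {n : ℤ // 1 ≤ n}

/-- Bilinear extension of structure constants `C` to a bracket on the free module. -/
def brP (C : PosIdx → PosIdx → (PosIdx →₀ ℂ)) (x y : PosIdx →₀ ℂ) : PosIdx →₀ ℂ :=
  x.sum fun n a => y.sum fun m b => (a * b) • C n m

/-- Structure constants of the first deformation of `L₁`:
`[l_n, l_m]_t = (m-n)(l_{n+m} + t l_{n+m-1})`. -/
def defC1 (t : ℂ) (n m : PosIdx) : PosIdx →₀ ℂ :=
  Finsupp.single ⟨n.1 + m.1, by have := n.2; have := m.2; omega⟩ ((m.1 : ℂ) - (n.1 : ℂ))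
    + Finsupp.single ⟨n.1 + m.1 - 1, by have := n.2; have := m.2; omega⟩
        (t * ((m.1 : ℂ) - (n.1 : ℂ)))

/-!
The Jacobiator `[[x, y], z] + [[y, z], x] + [[z, x], y]` of a bilinear bracket is trilinear and
invariant under cyclic rotation of its arguments, so it vanishes as soon as it vanishes on triples
of basis vectors. For `l_n, l_m, l_p` it only has components along `l_s, l_{s-1}, l_{s-2}`
(`s = n + m + p`), with coefficients `Σ (m - n)(p - n - m)`, `t Σ (m - n)(2p - 2n - 2m + 1)` and
`t² Σ (m - n)(p - n - m + 1)` (cyclic sums), each of which is identically zero.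
-/

namespace LinearMap

variable {R M : Type*} [CommSemiring R] [AddCommMonoid M] [Module R M]

def jacobiator (B : M →ₗ[R] M →ₗ[R] M) (x y z : M) : M :=
  B (B x y) z + B (B y z) x + B (B z x) y

variable (B : M →ₗ[R] M →ₗ[R] M)

theorem jacobiator_rotate (x y z : M) : B.jacobiator x y z = B.jacobiator y z x := by
  unfold jacobiator; abel

theorem jacobiator_add_left (x x' y z : M) :
    B.jacobiator (x + x') y z = B.jacobiator x y z + B.jacobiator x' y z := by
  simp only [jacobiator, map_add, add_apply]; abel

theorem jacobiator_smul_left (a : R) (x y z : M) :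
    B.jacobiator (a • x) y z = a • B.jacobiator x y z := by
  simp only [jacobiator, map_smul, smul_apply, smul_add]

end LinearMap

namespace Finsupp

variable {ι R : Type*} [CommSemiring R] (B : (ι →₀ R) →ₗ[R] (ι →₀ R) →ₗ[R] (ι →₀ R))

theorem jacobiator_eq_zero_of_single_left {y z : ι →₀ R}
    (h : ∀ n, B.jacobiator (single n 1) y z = 0) (x : ι →₀ R) : B.jacobiator x y z = 0 := by
  induction x using Finsupp.induction_linear with
  | zero => simp [LinearMap.jacobiator]
  | add x x' hx hx' => rw [B.jacobiator_add_left, hx, hx', add_zero]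
  | single n a => rw [← smul_single_one n a, B.jacobiator_smul_left, h, smul_zero]

theorem jacobiator_eq_zero_of_single
    (h : ∀ n m p, B.jacobiator (single n 1) (single m 1) (single p 1) = 0) (x y z : ι →₀ R) :
    B.jacobiator x y z = 0 := by
  refine jacobiator_eq_zero_of_single_left B (fun n => ?_) x
  rw [B.jacobiator_rotate]
  refine jacobiator_eq_zero_of_single_left B (fun m => ?_) y
  rw [B.jacobiator_rotate]
  exact jacobiator_eq_zero_of_single_left B (fun p => h p n m) z

end Finsupp

def brPₗ (C : PosIdx → PosIdx → (PosIdx →₀ ℂ)) :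
    (PosIdx →₀ ℂ) →ₗ[ℂ] (PosIdx →₀ ℂ) →ₗ[ℂ] (PosIdx →₀ ℂ) :=
  Finsupp.linearCombination ℂ fun n => Finsupp.linearCombination ℂ (C n)

theorem brPₗ_apply (C : PosIdx → PosIdx → (PosIdx →₀ ℂ)) (x y : PosIdx →₀ ℂ) :
    brPₗ C x y = brP C x y := by
  simp only [brPₗ, brP, Finsupp.linearCombination_apply, LinearMap.finsupp_sum_apply,
    LinearMap.smul_apply, Finsupp.smul_sum, mul_smul]

theorem brPₗ_single_single (C : PosIdx → PosIdx → (PosIdx →₀ ℂ)) (n m : PosIdx) (a b : ℂ) :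
    brPₗ C (Finsupp.single n a) (Finsupp.single m b) = (a * b) • C n m := by
  simp [brPₗ, mul_smul, smul_comm a b]

theorem jacobiator_defC1_single (t : ℂ) (n m p : PosIdx) :
    (brPₗ (defC1 t)).jacobiator (Finsupp.single n 1) (Finsupp.single m 1) (Finsupp.single p 1)
      = 0 := by
  obtain ⟨N, hN⟩ := n; obtain ⟨M, hM⟩ := m; obtain ⟨P, hP⟩ := p
  simp only [LinearMap.jacobiator, brPₗ_single_single, one_mul, one_smul, defC1, map_add,
    LinearMap.add_apply]
  ext ⟨Q, hQ⟩
  simp only [Finsupp.coe_add, Pi.add_apply, Finsupp.smul_apply, Finsupp.single_apply,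
    Subtype.mk.injEq, smul_eq_mul, Finsupp.coe_zero, Pi.zero_apply, mul_one]
  have hQ : Q = N + M + P ∨ Q = N + M + P - 1 ∨ Q = N + M + P - 2 ∨ Q < N + M + P - 2 ∨
      N + M + P < Q := by omega
  rcases hQ with rfl | rfl | rfl | hQ | hQ <;>
    simp (disch := omega) only [if_pos, if_neg] <;> push_cast <;> ring

/-- For every `t ∈ ℂ` the deformed bracket satisfies the Jacobi identity. -/
theorem defC1_jacobi (t : ℂ) (x y z : PosIdx →₀ ℂ) :
    brP (defC1 t) (brP (defC1 t) x y) z + brP (defC1 t) (brP (defC1 t) y z) x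
      + brP (defC1 t) (brP (defC1 t) z x) y = 0 := by
  simpa only [LinearMap.jacobiator, brPₗ_apply] using
    Finsupp.jacobiator_eq_zero_of_single _ (jacobiator_defC1_single t) x y z
end
end
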